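/- arXiv:2101.00867 — 7 statements merged into one kernel-verified Lean document; each statement's English description precedes it below -/
import Mathlib

section
/- A Steiner triple system of order 7 admits no zero-sum flow; that is, the only real-valued function f on the blocks of an STS(7) such that for every point x the sum of f over all blocks containing x is zero, is the zero function. -/
/-!
Through each point of an STS(v) pass (v - 1)/2 blocks, so two disjoint blocks force v ≥ 9: the
blocks joining a point of one to the three points of the other are distinct. Hence in an STS(7)
any two blocks meet in exactly one point. Summing the flow condition over all points gives
3 ∑ f = 0, and summing it over the three points of a block b gives 2 f(b) + ∑ f = 0.
-/

open Finset

section LinearSpace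

variable {α : Type*} [DecidableEq α] {X : Finset α} {B : Finset (Finset α)}

theorem existsUnique_block_of_ne
    (hpairs : ∀ p ⊆ X, #p = 2 → ∃! b, b ∈ B ∧ p ⊆ b)
    {x y : α} (hx : x ∈ X) (hy : y ∈ X) (hxy : x ≠ y) :
    ∃! b, b ∈ B ∧ x ∈ b ∧ y ∈ b := by
  have hp : {x, y} ⊆ X := insert_subset_iff.2 ⟨hx, singleton_subset_iff.2 hy⟩
  simpa only [insert_subset_iff, singleton_subset_iff] using hpairs {x, y} hp (card_pair hxy)

theorem card_inter_le_one_of_ne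
    (hsub : ∀ b ∈ B, b ⊆ X) (hpairs : ∀ p ⊆ X, #p = 2 → ∃! b, b ∈ B ∧ p ⊆ b)
    {b c : Finset α} (hb : b ∈ B) (hc : c ∈ B) (hbc : b ≠ c) : #(b ∩ c) ≤ 1 := by
  refine card_le_one.2 fun u hu v hv => ?_
  rw [mem_inter] at hu hv
  by_contra huv
  exact hbc ((existsUnique_block_of_ne hpairs (hsub b hb hu.1) (hsub b hb hv.1) huv).unique
    ⟨hb, hu.1, hv.1⟩ ⟨hc, hu.2, hv.2⟩)

theorem card_le_card_filter_mem_erase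
    (hsub : ∀ b ∈ B, b ⊆ X) (hpairs : ∀ p ⊆ X, #p = 2 → ∃! b, b ∈ B ∧ p ⊆ b)
    {b c : Finset α} {x : α} (hb : b ∈ B) (hc : c ∈ B) (hxb : x ∈ b) (hbc : Disjoint b c) :
    #c ≤ #((B.filter (x ∈ ·)).erase b) := by
  have hxc : x ∉ c := disjoint_left.1 hbc hxb
  refine card_le_card_of_forall_subsingleton (· ∈ ·) (fun y hy => ?_) fun d hd => ?_
  · have hxy : x ≠ y := by rintro rfl; exact hxc hy
    obtain ⟨d, ⟨hdB, hxd, hyd⟩, -⟩ :=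
      existsUnique_block_of_ne hpairs (hsub b hb hxb) (hsub c hc hy) hxy
    refine ⟨d, mem_erase.2 ⟨?_, mem_filter.2 ⟨hdB, hxd⟩⟩, hyd⟩
    rintro rfl
    exact disjoint_left.1 hbc hyd hy
  · obtain ⟨hdB, hxd⟩ := mem_filter.1 (mem_of_mem_erase hd)
    have hdc : d ≠ c := by rintro rfl; exact hxc hxd
    rintro y ⟨hyc, hyd⟩ z ⟨hzc, hzd⟩
    exact card_le_one.1 (card_inter_le_one_of_ne hsub hpairs hdB hc hdc) y
      (mem_inter.2 ⟨hyd, hyc⟩) z (mem_inter.2 ⟨hzd, hzc⟩)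

theorem card_filter_mem_mul_eq
    (hsub : ∀ b ∈ B, b ⊆ X) (hpairs : ∀ p ⊆ X, #p = 2 → ∃! b, b ∈ B ∧ p ⊆ b)
    {k : ℕ} (hcard : ∀ b ∈ B, #b = k) {x : α} (hx : x ∈ X) :
    #(B.filter (x ∈ ·)) * (k - 1) = #X - 1 := by
  rw [← card_erase_of_mem hx, ← mul_one #(X.erase x)]
  refine (card_mul_eq_card_mul (fun (y : α) (d : Finset α) => y ∈ d) (m := 1) (fun y hy => ?_) fun d hd => ?_).symm
  · obtain ⟨hyx, hy⟩ := mem_erase.1 hy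
    refine card_eq_one_iff_existsUnique.2 ?_
    simpa only [bipartiteAbove, mem_filter, and_assoc, and_comm (a := x ∈ _)] using
      existsUnique_block_of_ne hpairs hx hy (Ne.symm hyx)
  · obtain ⟨hdB, hxd⟩ := mem_filter.1 hd
    have : (X.erase x).bipartiteBelow (fun y d => y ∈ d) d = d.erase x := by
      ext y
      simp only [bipartiteBelow, mem_filter, mem_erase]
      exact ⟨fun h => ⟨h.1.1, h.2⟩, fun h => ⟨⟨h.1, hsub d hdB h.2⟩, h.2⟩⟩
    rw [this, card_erase_of_mem hxd, hcard d hdB]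

theorem nine_le_card_of_disjoint
    (hsub : ∀ b ∈ B, b ⊆ X) (hpairs : ∀ p ⊆ X, #p = 2 → ∃! b, b ∈ B ∧ p ⊆ b)
    (hcard : ∀ b ∈ B, #b = 3) {b c : Finset α} (hb : b ∈ B) (hc : c ∈ B)
    (hbc : Disjoint b c) : 9 ≤ #X := by
  obtain ⟨x, hxb⟩ : b.Nonempty := card_pos.1 (by rw [hcard b hb]; norm_num)
  have hle := card_le_card_filter_mem_erase hsub hpairs hb hc hxb hbc
  have hr := card_filter_mem_mul_eq hsub hpairs hcard (hsub b hb hxb)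
  rw [card_erase_of_mem (mem_filter.2 ⟨hb, hxb⟩), hcard c hc] at hle
  omega

end LinearSpace

section Flow

variable {α : Type*} [DecidableEq α]

theorem sum_sum_filter_mem_eq_sum_card_inter_smul {M : Type*} [AddCommMonoid M]
    (s : Finset α) (B : Finset (Finset α)) (f : Finset α → M) :
    ∑ x ∈ s, ∑ b ∈ B.filter (x ∈ ·), f b = ∑ b ∈ B, #(s ∩ b) • f b := by
  simp_rw [sum_filter]
  rw [sum_comm]
  refine sum_congr rfl fun b _ => ?_
  rw [sum_ite_mem, sum_const]

theorem sum_eq_zero_of_sum_filter_mem_eq_zero {X : Finset α} {B : Finset (Finset α)}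
    {f : Finset α → ℝ} (hsub : ∀ b ∈ B, b ⊆ X) {k : ℕ} (hk : k ≠ 0)
    (hcard : ∀ b ∈ B, #b = k) (hflow : ∀ x ∈ X, ∑ b ∈ B.filter (x ∈ ·), f b = 0) :
    ∑ b ∈ B, f b = 0 := by
  have htotal := sum_sum_filter_mem_eq_sum_card_inter_smul X B f
  rw [sum_eq_zero hflow, sum_congr rfl fun b hb => by
    rw [inter_eq_right.2 (hsub b hb), hcard b hb], ← smul_sum, eq_comm] at htotal
  exact (smul_eq_zero.1 htotal).resolve_left hk

theorem sum_sum_filter_mem_eq_of_card_inter_eq_one {B : Finset (Finset α)}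
    (f : Finset α → ℝ) {b : Finset α} (hb : b ∈ B)
    (hmeet : ∀ c ∈ B, c ≠ b → #(b ∩ c) = 1) :
    ∑ x ∈ b, ∑ c ∈ B.filter (x ∈ ·), f c = (#b - 1 : ℝ) * f b + ∑ c ∈ B, f c := by
  rw [sum_sum_filter_mem_eq_sum_card_inter_smul, ← add_sum_erase _ _ hb,
    ← add_sum_erase _ f hb, inter_self,
    sum_congr rfl fun c hc => by rw [hmeet c (mem_erase.1 hc).2 (mem_erase.1 hc).1, one_smul],
    nsmul_eq_mul]
  ring

end Flow

/-- An STS(7) admits no (nonzero) zero-sum flow: any real function on the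
blocks whose sum over the blocks through each point is zero must be identically zero. -/
theorem sts7_no_zero_sum_flow {α : Type*} [DecidableEq α]
    (X : Finset α) (B : Finset (Finset α))
    (hX : X.card = 7)
    (hblocks : ∀ b ∈ B, b ⊆ X ∧ b.card = 3)
    (hpairs : ∀ p ⊆ X, p.card = 2 → ∃! b, b ∈ B ∧ p ⊆ b)
    (f : Finset α → ℝ)
    (hflow : ∀ x ∈ X, ∑ b ∈ B.filter (fun b => x ∈ b), f b = 0) :
    ∀ b ∈ B, f b = 0 := by
  have hsub b hb : b ⊆ X := (hblocks b hb).1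
  have hcard b hb : #b = 3 := (hblocks b hb).2
  have hmeet : ∀ b ∈ B, ∀ c ∈ B, c ≠ b → #(b ∩ c) = 1 := by
    intro b hb c hc hcb
    have hle := card_inter_le_one_of_ne hsub hpairs hb hc hcb.symm
    have hpos : 0 < #(b ∩ c) := card_pos.2 <| not_disjoint_iff_nonempty_inter.1 fun hbc => by
      have := nine_le_card_of_disjoint hsub hpairs hcard hb hc hbc
      omega
    omega
  have htotal := sum_eq_zero_of_sum_filter_mem_eq_zero hsub three_ne_zero hcard hflow
  intro b hb
  have hlocal := sum_sum_filter_mem_eq_of_card_inter_eq_one f hb (hmeet b hb)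
  rw [sum_eq_zero fun x hx => hflow x (hsub b hb hx), htotal, hcard b hb] at hlocal
  push_cast at hlocal
  linarith
end

section
/- Let v ≡ 9 (mod 18) and let S be a cyclic Steiner triple system on ℤ_v (with automorphism i ↦ i+1). Then S has a full orbit of blocks whose blocks meet all three congruence classes modulo 3; equivalently, some block {a, b, c} in a full orbit satisfies that a, b, c are pairwise incongruent modulo 3. -/
/-!
Colour each point of `ℤ_v` by its residue mod 3. The three colour classes have size `v / 3`, so
`2v² / 3` ordered pairs are bichromatic. Every ordered pair of distinct points lies in exactly one
block, and a block that is not rainbow has at most 4 bichromatic ordered pairs out of 6;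
without a rainbow block there would be at most `2(v² - v) / 3` bichromatic pairs. So some block is
rainbow. Its orbit is full: a translation by `u` fixing a triple satisfies `3u = 0`, so `9 ∣ v`
forces `u ≡ 0 (mod 3)`, and a colour-preserving translation fixing a rainbow triple is trivial.
-/

open Finset Function

section PairPartition

variable {α : Type*} [DecidableEq α] {B : Finset (Finset α)}

theorem card_filter_offDiag_univ_eq_sum [Fintype α]
    (hB : ∀ x y : α, x ≠ y → ∃! b, b ∈ B ∧ x ∈ b ∧ y ∈ b) (P : α × α → Prop) [DecidablePred P] :
    #{p ∈ (univ : Finset α).offDiag | P p} = ∑ b ∈ B, #{p ∈ b.offDiag | P p} := by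
  have hunion : (univ : Finset α).offDiag = B.biUnion offDiag := by
    ext ⟨x, y⟩
    simp only [mem_offDiag, mem_univ, true_and, mem_biUnion]
    constructor
    · intro hxy
      obtain ⟨b, ⟨hb, hx, hy⟩, -⟩ := hB x y hxy
      exact ⟨b, hb, hx, hy, hxy⟩
    · rintro ⟨b, -, -, -, hxy⟩
      exact hxy
  rw [hunion, filter_biUnion, card_biUnion]
  intro b₁ hb₁ b₂ hb₂ hne
  rw [onFun, disjoint_left]
  rintro ⟨x, y⟩ h₁ h₂
  simp only [mem_filter, mem_offDiag] at h₁ h₂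
  obtain ⟨b, -, hb⟩ := hB x y h₁.1.2.2
  exact hne ((hb b₁ ⟨hb₁, h₁.1.1, h₁.1.2.1⟩).trans (hb b₂ ⟨hb₂, h₂.1.1, h₂.1.2.1⟩).symm)

theorem card_filter_offDiag_add_two_le {γ : Type*} [DecidableEq γ] (f : α → γ) {s : Finset α}
    (hf : ¬ Set.InjOn f s) : #{p ∈ s.offDiag | f p.1 ≠ f p.2} + 2 ≤ #s.offDiag := by
  obtain ⟨x, hx, y, hy, hfxy, hxy⟩ : ∃ x ∈ s, ∃ y ∈ s, f x = f y ∧ x ≠ y := by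
    simpa [Set.InjOn] using hf
  have hxy_mem : (x, y) ∈ s.offDiag := mem_offDiag.2 ⟨hx, hy, hxy⟩
  have hyx_mem : (y, x) ∈ s.offDiag.erase (x, y) :=
    mem_erase.2 ⟨by simp [hxy], mem_offDiag.2 ⟨hy, hx, hxy.symm⟩⟩
  have hsub : {p ∈ s.offDiag | f p.1 ≠ f p.2} ⊆ (s.offDiag.erase (x, y)).erase (y, x) := by
    intro p hp
    simp only [mem_filter] at hp
    refine mem_erase.2 ⟨?_, mem_erase.2 ⟨?_, hp.1⟩⟩ <;> rintro rfl
    exacts [hp.2 hfxy.symm, hp.2 hfxy]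
  calc #{p ∈ s.offDiag | f p.1 ≠ f p.2} + 2
      ≤ #((s.offDiag.erase (x, y)).erase (y, x)) + 1 + 1 := by grw [hsub]
    _ = #s.offDiag := by rw [card_erase_add_one hyx_mem, card_erase_add_one hxy_mem]

theorem exists_injOn_of_two_mul_card_lt [Fintype α] {γ : Type*} [DecidableEq γ]
    (hcard : ∀ b ∈ B, #b = 3) (hB : ∀ x y : α, x ≠ y → ∃! b, b ∈ B ∧ x ∈ b ∧ y ∈ b)
    (f : α → γ) (h : 2 * #(univ : Finset α).offDiag < 3 * #{p : α × α | f p.1 ≠ f p.2}) :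
    ∃ b ∈ B, Set.InjOn f b := by
  by_contra! hno
  have hmixed : #{p : α × α | f p.1 ≠ f p.2} = ∑ b ∈ B, #{p ∈ b.offDiag | f p.1 ≠ f p.2} := by
    rw [← card_filter_offDiag_univ_eq_sum hB]
    congr 1
    ext p
    simp only [mem_filter, mem_univ, true_and, mem_offDiag]
    exact ⟨fun hp => ⟨fun he => hp (congrArg f he), hp⟩, And.right⟩
  have hall : #(univ : Finset α).offDiag = ∑ b ∈ B, #b.offDiag := by
    simpa using card_filter_offDiag_univ_eq_sum hB fun _ => True
  have hsix : ∑ b ∈ B, #b.offDiag = 6 * #B := by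
    rw [sum_congr rfl fun b hb => by rw [offDiag_card, hcard b hb], sum_const, smul_eq_mul,
      mul_comm]
  have hle : ∑ b ∈ B, (#{p ∈ b.offDiag | f p.1 ≠ f p.2} + 2) ≤ ∑ b ∈ B, #b.offDiag :=
    sum_le_sum fun b hb => card_filter_offDiag_add_two_le f (hno b hb)
  rw [sum_add_distrib, sum_const, smul_eq_mul] at hle
  omega

end PairPartition

section Coloring

variable {G H F : Type*} [AddGroup G] [Fintype G] [AddMonoid H] [Fintype H] [DecidableEq H]
  [FunLike F G H] [AddMonoidHomClass F G H]

theorem card_fiber_mul_card_of_surjective (f : F) (hf : Surjective f) (y : H) :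
    #{x | f x = y} * Fintype.card H = Fintype.card G := by
  calc #{x | f x = y} * Fintype.card H = ∑ z : H, #{x | f x = z} := by
        rw [sum_congr rfl fun z _ => AddMonoidHom.card_fiber_eq_of_mem_range f (hf z) (hf y),
          sum_const, card_univ, smul_eq_mul, mul_comm]
    _ = Fintype.card G := (card_eq_sum_card_fiberwise fun x _ => mem_univ (f x)).symm

theorem card_ne_mul_card_add_of_surjective (f : F) (hf : Surjective f) :
    #{p : G × G | f p.1 ≠ f p.2} * Fintype.card H + Fintype.card G * Fintype.card G =
      Fintype.card G * Fintype.card G * Fintype.card H := by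
  have hrow : ∀ x : G, #{y | f x ≠ f y} + #{y | f y = 0} = Fintype.card G := by
    intro x
    rw [← AddMonoidHom.card_fiber_eq_of_mem_range f (hf (f x)) (hf 0), ← card_univ]
    simpa only [not_not, eq_comm, add_comm] using
      card_filter_add_card_filter_not (s := (univ : Finset G)) fun y => f x = f y
  have hsum : #{p : G × G | f p.1 ≠ f p.2} + Fintype.card G * #{y | f y = 0} =
      Fintype.card G * Fintype.card G := by
    calc _ = ∑ x : G, (#{y | f x ≠ f y} + #{y | f y = 0}) := by
          rw [sum_add_distrib, sum_const, card_univ, smul_eq_mul, card_filter,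
            Fintype.sum_prod_type]
          simp only [← card_filter]
      _ = _ := by rw [sum_congr rfl fun x _ => hrow x, sum_const, card_univ, smul_eq_mul]
  have hfib := card_fiber_mul_card_of_surjective f hf 0
  calc _ = (#{p : G × G | f p.1 ≠ f p.2} + Fintype.card G * #{y | f y = 0}) * Fintype.card H := by
        rw [add_mul, mul_assoc, hfib]
    _ = _ := by rw [hsum]

theorem two_mul_card_offDiag_lt_of_surjective [DecidableEq G] (f : F) (hf : Surjective f)
    (hH : 3 ≤ Fintype.card H) :
    2 * #(univ : Finset G).offDiag < 3 * #{p : G × G | f p.1 ≠ f p.2} := by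
  have key := card_ne_mul_card_add_of_surjective f hf
  have hG : 0 < Fintype.card G := Fintype.card_pos
  rw [offDiag_card, card_univ]
  set n := Fintype.card G
  set m := #{p : G × G | f p.1 ≠ f p.2}
  have h2 : 2 * (n * n) ≤ 3 * m := by nlinarith
  have : n ≤ n * n := Nat.le_mul_self n
  omega

end Coloring

section Translation

variable {G : Type*} [AddCommGroup G] [DecidableEq G]

theorem Finset.card_nsmul_eq_zero_of_image_add_eq {s : Finset G} {u : G}
    (h : s.image (· + u) = s) : #s • u = 0 := by
  have hsum : ∑ x ∈ s.image (· + u), x = ∑ x ∈ s, x + #s • u := by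
    rw [sum_image fun x _ y _ => add_right_cancel, sum_add_distrib, sum_const]
  rwa [h, left_eq_add] at hsum

theorem eq_zero_of_image_add_eq_of_injOn {H F : Type*} [AddZeroClass H] [FunLike F G H]
    [AddMonoidHomClass F G H] {f : F} {s : Finset G} (hs : Set.InjOn f s) (hne : s.Nonempty)
    {u : G} (hu : f u = 0) (h : s.image (· + u) = s) : u = 0 := by
  obtain ⟨a, ha⟩ := hne
  have hau : a + u ∈ s := h ▸ mem_image_of_mem (· + u) ha
  exact add_eq_left.1 (hs hau ha (by rw [map_add, hu, add_zero]))

theorem card_image_image_add_eq_card [Fintype G] {s : Finset G}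
    (h : ∀ u, s.image (· + u) = s → u = 0) :
    #(univ.image fun t : G => s.image (· + t)) = Fintype.card G := by
  refine card_image_of_injective _ fun t t' htt' => sub_eq_zero.1 (h _ ?_)
  have := congrArg (image (· - t')) htt'
  simpa only [image_image, comp_def, add_sub_assoc, sub_self, add_zero, image_id'] using this

end Translation

theorem ZMod.castHom_apply_eq_iff {m n : ℕ} [NeZero n] (h : m ∣ n) (x y : ZMod n) :
    castHom h (ZMod m) x = castHom h (ZMod m) y ↔ x.val % m = y.val % m := by
  simp only [castHom_apply, cast_eq_val, natCast_eq_natCast_iff']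

theorem ZMod.castHom_eq_zero_of_nsmul_eq_zero {m n : ℕ} [NeZero n] (h : m * m ∣ n) {u : ZMod n}
    (hu : m • u = 0) : castHom ((dvd_mul_left m m).trans h) (ZMod m) u = 0 := by
  have hm : 0 < m := Nat.pos_of_ne_zero fun hm => NeZero.ne n (by simpa [hm] using h)
  rw [← natCast_zmod_val u, nsmul_eq_mul, ← Nat.cast_mul, natCast_eq_zero_iff] at hu
  rw [castHom_apply, cast_eq_val, natCast_eq_zero_iff]
  exact Nat.dvd_of_mul_dvd_mul_left hm (h.trans hu)

theorem cyclic_sts_full_orbit_type3_general (v : ℕ) [NeZero v] (hv : v % 18 = 9)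
    (B : Finset (Finset (ZMod v)))
    (hcard : ∀ b ∈ B, b.card = 3)
    (hpairs : ∀ x y : ZMod v, x ≠ y → ∃! b, b ∈ B ∧ x ∈ b ∧ y ∈ b) :
    ∃ b ∈ B,
      (Finset.univ.image (fun t : ZMod v => b.image (fun x => x + t))).card = v ∧
      ∃ a c d : ZMod v, b = {a, c, d} ∧
        a.val % 3 ≠ c.val % 3 ∧ a.val % 3 ≠ d.val % 3 ∧ c.val % 3 ≠ d.val % 3 := by
  have h9 : 3 * 3 ∣ v := by omega
  have h3 : 3 ∣ v := (dvd_mul_left 3 3).trans h9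
  let φ := ZMod.castHom h3 (ZMod 3)
  obtain ⟨b, hb, hinj⟩ := exists_injOn_of_two_mul_card_lt hcard hpairs φ
    (two_mul_card_offDiag_lt_of_surjective φ (ZMod.castHom_surjective h3) (by simp))
  obtain ⟨a, c, d, hac, had, hcd, rfl⟩ := card_eq_three.1 (hcard _ hb)
  refine ⟨_, hb, ?_, a, c, d, rfl, ?_⟩
  · rw [card_image_image_add_eq_card fun u hu => ?_, ZMod.card]
    have h3u : 3 • u = 0 := hcard _ hb ▸ card_nsmul_eq_zero_of_image_add_eq hu
    exact eq_zero_of_image_add_eq_of_injOn hinj (insert_nonempty _ _)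
      (ZMod.castHom_eq_zero_of_nsmul_eq_zero h9 h3u) hu
  · have hres : ∀ x ∈ ({a, c, d} : Finset (ZMod v)), ∀ y ∈ ({a, c, d} : Finset (ZMod v)),
        x ≠ y → x.val % 3 ≠ y.val % 3 := fun x hx y hy hxy =>
      mt (ZMod.castHom_apply_eq_iff h3 x y).2 (hinj.ne hx hy hxy)
    exact ⟨hres _ (by simp) _ (by simp) hac, hres _ (by simp) _ (by simp) had,
      hres _ (by simp) _ (by simp) hcd⟩

/-- for v ≡ 9 (mod 18), every cyclic STS(v) on ℤ_v has a full orbit of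
Type 3: some block {a,c,d} whose orbit under translation has size v and whose elements
are pairwise incongruent modulo 3. -/
theorem cyclic_sts_full_orbit_type3 (v : ℕ) [NeZero v] (hv : v % 18 = 9)
    (B : Finset (Finset (ZMod v)))
    (hcard : ∀ b ∈ B, b.card = 3)
    (hpairs : ∀ x y : ZMod v, x ≠ y → ∃! b, b ∈ B ∧ x ∈ b ∧ y ∈ b)
    (hcyc : ∀ b ∈ B, b.image (fun x => x + 1) ∈ B) :
    ∃ b ∈ B,
      (Finset.univ.image (fun t : ZMod v => b.image (fun x => x + t))).card = v ∧
      ∃ a c d : ZMod v, b = {a, c, d} ∧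
        a.val % 3 ≠ c.val % 3 ∧ a.val % 3 ≠ d.val % 3 ∧ c.val % 3 ≠ d.val % 3 :=
  cyclic_sts_full_orbit_type3_general v hv B hcard hpairs
end

section
/- Let v ≡ 3 or 15 (mod 18) and let S be a cyclic Steiner triple system on ℤ_v with no full orbit of Type 3 (no full orbit whose blocks meet all three residue classes mod 3). Then S also has no full orbit of Type 1, i.e., no full orbit whose blocks lie entirely within a single residue class modulo 3; in fact all (v−3)/6 full orbits are of Type 2. -/
/-!
Write v = 3m and count the ordered pairs of distinct points of ℤ_v in the same residue class
mod 3: there are 3m(m - 1), and each lies in exactly one block. A block whose translates are not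
all distinct is fixed by a translation s ≠ 0; comparing sums gives 3s = 0, so the block is a coset
{x, x + m, x + 2m}. As 3 ∤ m it meets all three classes and contains no such pair, and distinct
cosets are disjoint, so there are at most m such blocks. The remaining blocks, at least
(9m² - 9m)/6 of them, are not of Type 3 and so contain at least two such pairs each (two for
Type 2, six for Type 1). Since 2 · (9m² - 9m)/6 = 3m(m - 1), each contains exactly two.
-/

open Finset

section SameFiberPairs

variable {α β : Type*} [DecidableEq β]

def sameFiberPairs (c : α → β) (s : Finset α) : Finset (α × α) :=
  {p ∈ s.offDiag | c p.1 = c p.2}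

variable {c : α → β} {s : Finset α}

lemma sameFiberPairs_eq_empty_of_card_image_eq (h : #(s.image c) = #s) :
    sameFiberPairs c s = ∅ := by
  have hinj : Set.InjOn c s := card_image_iff.mp h
  refine filter_eq_empty_iff.mpr fun p hp hsame => ?_
  obtain ⟨h1, h2, hne⟩ := mem_offDiag.mp hp
  exact hne (hinj h1 h2 hsame)

lemma two_le_card_sameFiberPairs_of_card_image_lt (h : #(s.image c) < #s) :
    2 ≤ #(sameFiberPairs c s) := by
  have hninj : ¬ Set.InjOn c s := fun hinj => h.ne (card_image_of_injOn hinj)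
  simp only [Set.InjOn, not_forall] at hninj
  obtain ⟨x, hx, y, hy, hxy, hne⟩ := hninj
  refine one_lt_card.mpr ⟨(x, y), ?_, (y, x), ?_, by simp [hne]⟩ <;>
    simp_all [sameFiberPairs, Ne.symm hne]

lemma sameFiberPairs_eq_offDiag_of_card_image_eq_one (h : #(s.image c) = 1) :
    sameFiberPairs c s = s.offDiag := by
  obtain ⟨r, hr⟩ := card_eq_one.mp h
  have hc : ∀ x ∈ s, c x = r := fun x hx => mem_singleton.mp (hr ▸ mem_image_of_mem c hx)
  refine filter_true_of_mem fun p hp => ?_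
  obtain ⟨h1, h2, -⟩ := mem_offDiag.mp hp
  rw [hc _ h1, hc _ h2]

lemma card_image_eq_two_of_card_sameFiberPairs_eq_two (hs : #s = 3)
    (h : #(sameFiberPairs c s) = 2) : #(s.image c) = 2 := by
  have hpos : 0 < #(s.image c) := card_pos.mpr (image_nonempty.mpr (card_pos.mp (by omega)))
  have hle : #(s.image c) ≤ 3 := card_image_le.trans hs.le
  have hne3 : #(s.image c) ≠ 3 := fun h3 => by
    rw [sameFiberPairs_eq_empty_of_card_image_eq (h3.trans hs.symm), card_empty] at h
    omega
  have hne1 : #(s.image c) ≠ 1 := fun h1 => by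
    rw [sameFiberPairs_eq_offDiag_of_card_image_eq_one h1, offDiag_card, hs] at h
    omega
  omega

lemma card_sameFiberPairs_univ [Fintype α] [DecidableEq α] {k : ℕ}
    (hk : ∀ x, #{y | c y = c x} = k) :
    #(sameFiberPairs c univ) = Fintype.card α * k - Fintype.card α := by
  rw [card_eq_sum_card_fiberwise (f := Prod.fst) (t := univ) (fun _ _ => mem_univ _),
    ← Nat.mul_sub_one, ← smul_eq_mul, ← card_univ, ← sum_const]
  refine sum_congr rfl fun x _ => ?_
  rw [← hk x, ← card_erase_of_mem (s := {y | c y = c x}) (a := x) (by simp)]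
  refine card_nbij' Prod.snd (fun y => (x, y)) ?_ ?_ ?_ ?_ <;> intro p <;>
    simp [sameFiberPairs] <;> grind

end SameFiberPairs

section PairPartition

variable {α : Type*} {B : Finset (Finset α)}

def CoversPairsUniquely (B : Finset (Finset α)) : Prop :=
  ∀ x y : α, x ≠ y → ∃! b, b ∈ B ∧ x ∈ b ∧ y ∈ b

lemma eq_of_mem_of_mem_of_ne (hB : CoversPairsUniquely B)
    {b b' : Finset α} (hb : b ∈ B) (hb' : b' ∈ B) {x y : α} (hxy : x ≠ y)
    (hx : x ∈ b) (hy : y ∈ b) (hx' : x ∈ b') (hy' : y ∈ b') : b = b' :=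
  (hB x y hxy).unique ⟨hb, hx, hy⟩ ⟨hb', hx', hy'⟩

variable [Fintype α] [DecidableEq α]

lemma sum_card_filter_offDiag (hB : CoversPairsUniquely B) (p : α × α → Prop)
    [DecidablePred p] :
    ∑ b ∈ B, #{q ∈ b.offDiag | p q} = #{q ∈ univ.offDiag | p q} := by
  have hunion : univ.offDiag.filter p = B.biUnion fun b => b.offDiag.filter p := by
    ext q
    simp only [mem_filter, mem_offDiag, mem_biUnion, mem_univ, true_and]
    constructor
    · rintro ⟨hne, hq⟩
      obtain ⟨b, ⟨hb, h1, h2⟩, -⟩ := hB q.1 q.2 hne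
      exact ⟨b, hb, ⟨h1, h2, hne⟩, hq⟩
    · rintro ⟨b, -, ⟨-, -, hne⟩, hq⟩
      exact ⟨hne, hq⟩
  rw [hunion, card_biUnion]
  intro b hb b' hb' hne
  refine disjoint_left.mpr fun q hq hq' => hne ?_
  simp only [mem_filter, mem_offDiag] at hq hq'
  exact eq_of_mem_of_mem_of_ne hB hb hb' hq.1.2.2 hq.1.1 hq.1.2.1 hq'.1.1 hq'.1.2.1

lemma six_mul_card_eq (hB : CoversPairsUniquely B) (h3 : ∀ b ∈ B, #b = 3) :
    6 * #B = Fintype.card α * Fintype.card α - Fintype.card α := by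
  have h := sum_card_filter_offDiag hB fun _ => True
  simp only [filter_true, offDiag_card, card_univ] at h
  rw [← h, sum_const_nat fun b hb => by rw [h3 b hb], mul_comm]

lemma three_mul_card_le_of_forall_apply_mem (hB : CoversPairsUniquely B)
    (h3 : ∀ b ∈ B, #b = 3) {σ : α → α} (hσ : ∀ z, σ z ≠ z) {S : Finset (Finset α)}
    (hS : S ⊆ B) (hinv : ∀ b ∈ S, ∀ z ∈ b, σ z ∈ b) :
    3 * #S ≤ Fintype.card α := by
  have hdisj : (S : Set (Finset α)).PairwiseDisjoint id := by
    intro b hb b' hb' hne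
    refine disjoint_left.mpr fun z hz hz' => hne ?_
    exact eq_of_mem_of_mem_of_ne hB (hS hb) (hS hb') (hσ z).symm hz (hinv b hb z hz) hz'
      (hinv b' hb' z hz')
  calc 3 * #S = #(S.biUnion id) := by
        rw [card_biUnion hdisj, mul_comm]
        exact (sum_const_nat fun b hb => h3 b (hS hb)).symm
    _ ≤ Fintype.card α := card_le_univ _

end PairPartition

section Translates

variable {G : Type*} [DecidableEq G]

def translates [Add G] [Fintype G] (b : Finset G) : Finset (Finset G) :=
  univ.image fun t => b.image (· + t)

lemma exists_ne_zero_image_add_eq_self [AddGroup G] [Fintype G] {b : Finset G}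
    (h : #(translates b) ≠ Fintype.card G) : ∃ s ≠ 0, b.image (· + s) = b := by
  have hninj : ¬ Set.InjOn (fun t => b.image (· + t)) (univ : Finset G) := fun hinj =>
    h (by rw [translates, card_image_of_injOn hinj, card_univ])
  simp only [Set.InjOn, not_forall] at hninj
  obtain ⟨t, -, t', -, heq, hne⟩ := hninj
  refine ⟨t - t', sub_ne_zero.mpr hne, ?_⟩
  have := congrArg (·.image (· + -t')) heq
  simp only [image_image, Function.comp_def, add_assoc, add_neg_cancel, add_zero, image_id']
    at this
  rwa [sub_eq_add_neg]

lemma card_nsmul_eq_zero_of_image_add_eq_self [AddCommGroup G] {b : Finset G} {s : G}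
    (h : b.image (· + s) = b) : #b • s = 0 := by
  have hsum : ∑ x ∈ b, (x + s) = ∑ x ∈ b, x := by
    conv_rhs => rw [← h]
    rw [sum_image fun x _ y _ => add_right_cancel]
  rwa [sum_add_distrib, sum_const, add_eq_left] at hsum

end Translates

section ZModThreeMul

variable {m : ℕ} [NeZero (3 * m)]

lemma natCast_ne_zero_zmod_three_mul : (m : ZMod (3 * m)) ≠ 0 := by
  have hm : m ≠ 0 := by simpa using NeZero.ne (3 * m)
  rw [Ne, ZMod.natCast_eq_zero_iff]
  intro h
  have := Nat.le_of_dvd (Nat.pos_of_ne_zero hm) h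
  omega

-- The nonzero elements killed by 3 are m and 2m, and 2m + 2m = m.
lemma eq_natCast_or_add_self_eq_natCast {s : ZMod (3 * m)} (hs : s ≠ 0) (h : 3 • s = 0) :
    s = m ∨ s + s = m := by
  have hdvd : 3 * m ∣ 3 * s.val := by
    rw [← ZMod.natCast_eq_zero_iff, Nat.cast_mul, ZMod.natCast_zmod_val, ← nsmul_eq_mul, h]
  obtain ⟨k, hk⟩ := Nat.dvd_of_mul_dvd_mul_left (by norm_num) hdvd
  have hlt : s.val < 3 * m := ZMod.val_lt s
  have hpos : s.val ≠ 0 := (ZMod.val_ne_zero s).mpr hs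
  have hs_eq : s = (m * k : ℕ) := by rw [← hk, ZMod.natCast_zmod_val]
  have h3m : (3 * m : ZMod (3 * m)) = 0 := by exact_mod_cast ZMod.natCast_self (3 * m)
  obtain rfl | rfl : k = 1 ∨ k = 2 := by
    rcases k with _ | _ | _ | k
    · simp_all
    · simp
    · simp
    · nlinarith
  · left; simpa using hs_eq
  · right; rw [hs_eq]; push_cast; linear_combination h3m

lemma val_add_natCast_mod_three (z : ZMod (3 * m)) (k : ℕ) :
    (z + k).val % 3 = (z.val + k) % 3 := by
  rw [ZMod.val_add, ZMod.val_natCast, Nat.mod_mod_of_dvd _ (dvd_mul_right 3 m), Nat.add_mod,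
    Nat.mod_mod_of_dvd _ (dvd_mul_right 3 m), ← Nat.add_mod]

lemma card_filter_val_mod_three {i : ℕ} (hi : i < 3) :
    #{x : ZMod (3 * m) | x.val % 3 = i} = m := by
  have hrange : #{x : ZMod (3 * m) | x.val % 3 = i} = #{n ∈ range (3 * m) | n ≡ i [MOD 3]} := by
    refine card_nbij' ZMod.val (fun n => (n : ZMod (3 * m))) ?_ ?_ ?_ ?_ <;> intro x hx <;>
      simp_all [Nat.ModEq, Nat.mod_eq_of_lt hi, ZMod.val_lt, ZMod.val_natCast, Nat.mod_eq_of_lt]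
  rw [hrange, ← Nat.count_eq_card_filter_range, Nat.count_modEq_card _ (by norm_num)]
  simp

lemma card_image_val_mod_three_eq_three (hm3 : m % 3 ≠ 0) {b : Finset (ZMod (3 * m))}
    (hb : #b = 3) (hinv : ∀ z ∈ b, z + m ∈ b) : #(b.image (·.val % 3)) = 3 := by
  obtain ⟨z, hz⟩ := card_pos.mp (by omega : 0 < #b)
  have h1 : (z.val + m) % 3 ∈ b.image (·.val % 3) := by
    rw [← val_add_natCast_mod_three]
    exact mem_image_of_mem _ (hinv z hz)
  have h2 : (z.val + (m + m)) % 3 ∈ b.image (·.val % 3) := by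
    rw [← val_add_natCast_mod_three, Nat.cast_add, ← add_assoc]
    exact mem_image_of_mem _ (hinv _ (hinv z hz))
  have hsub : ({z.val % 3, (z.val + m) % 3, (z.val + (m + m)) % 3} : Finset ℕ) ⊆
      b.image (·.val % 3) := by
    simp [insert_subset_iff, mem_image_of_mem _ hz, h1, h2]
  refine le_antisymm (card_image_le.trans hb.le) (le_trans ?_ (card_le_card hsub))
  rw [card_insert_of_notMem, card_insert_of_notMem, card_singleton] <;> simp <;> omega

lemma add_natCast_mem_of_card_translates_ne {b : Finset (ZMod (3 * m))} (hb : #b = 3)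
    (h : #(translates b) ≠ 3 * m) : ∀ z ∈ b, z + m ∈ b := by
  obtain ⟨s, hs, hbs⟩ := exists_ne_zero_image_add_eq_self (b := b) (by rwa [ZMod.card])
  have h3 := card_nsmul_eq_zero_of_image_add_eq_self hbs
  rw [hb] at h3
  have hmem : ∀ z ∈ b, z + s ∈ b := fun z hz => hbs ▸ mem_image_of_mem _ hz
  rcases eq_natCast_or_add_self_eq_natCast hs h3 with rfl | hss
  · exact hmem
  · intro z hz
    rw [← hss, ← add_assoc]
    exact hmem _ (hmem z hz)

lemma sameFiberPairs_eq_empty_of_card_translates_ne (hm3 : m % 3 ≠ 0)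
    {b : Finset (ZMod (3 * m))} (hb : #b = 3) (h : #(translates b) ≠ 3 * m) :
    sameFiberPairs (·.val % 3) b = ∅ := by
  refine sameFiberPairs_eq_empty_of_card_image_eq ?_
  rw [card_image_val_mod_three_eq_three hm3 hb (add_natCast_mem_of_card_translates_ne hb h), hb]

variable {B : Finset (Finset (ZMod (3 * m)))}

lemma card_filter_card_translates_ne_le (hcard : ∀ b ∈ B, #b = 3)
    (hpairs : CoversPairsUniquely B) :
    #{b ∈ B | #(translates b) ≠ 3 * m} ≤ m := by
  have h := three_mul_card_le_of_forall_apply_mem hpairs hcard (σ := (· + m))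
    (fun z => by simpa using natCast_ne_zero_zmod_three_mul) (filter_subset _ B)
    fun b hb => add_natCast_mem_of_card_translates_ne (hcard b (mem_filter.mp hb).1)
      (mem_filter.mp hb).2
  rw [ZMod.card] at h
  omega

lemma sum_card_sameFiberPairs_val_mod_three (hpairs : CoversPairsUniquely B) :
    ∑ b ∈ B, #(sameFiberPairs (·.val % 3) b) = 3 * m * m - 3 * m := by
  have huniv := card_sameFiberPairs_univ (c := (·.val % 3)) fun x : ZMod (3 * m) =>
    card_filter_val_mod_three (Nat.mod_lt _ (by norm_num))
  rw [ZMod.card] at huniv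
  exact (sum_card_filter_offDiag hpairs _).trans huniv

lemma card_sameFiberPairs_eq_two_of_card_translates_eq (hm3 : m % 3 ≠ 0)
    (hcard : ∀ b ∈ B, #b = 3) (hpairs : CoversPairsUniquely B)
    (hno3 : ∀ b ∈ B, #(translates b) = 3 * m → #(b.image (·.val % 3)) ≠ 3) :
    ∀ b ∈ B, #(translates b) = 3 * m → #(sameFiberPairs (·.val % 3) b) = 2 := by
  set full := {b ∈ B | #(translates b) = 3 * m}
  have hfull_card : 3 * m * m - 3 * m ≤ 2 * #full := by
    have hB := six_mul_card_eq hpairs hcard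
    have hsplit : #full + #{b ∈ B | #(translates b) ≠ 3 * m} = #B :=
      card_filter_add_card_filter_not _
    have hshort := card_filter_card_translates_ne_le hcard hpairs
    rw [ZMod.card, show 3 * m * (3 * m) = 9 * (m * m) by ring] at hB
    rw [show 3 * m * m = 3 * (m * m) by ring]
    omega
  have hshort_pairs :
      ∑ b ∈ B with #(translates b) ≠ 3 * m, #(sameFiberPairs (·.val % 3) b) = 0 :=
    sum_eq_zero fun b hb => by
      rw [sameFiberPairs_eq_empty_of_card_translates_ne hm3 (hcard b (mem_filter.mp hb).1)
        (mem_filter.mp hb).2, card_empty]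
  have hsum_full : ∑ b ∈ full, #(sameFiberPairs (·.val % 3) b) = 3 * m * m - 3 * m := by
    rw [← sum_card_sameFiberPairs_val_mod_three hpairs,
      ← sum_filter_add_sum_filter_not B (fun b => #(translates b) = 3 * m), hshort_pairs,
      add_zero]
  have hle : ∀ b ∈ full, 2 ≤ #(sameFiberPairs (·.val % 3) b) := fun b hb => by
    obtain ⟨hbB, hbfull⟩ := mem_filter.mp hb
    refine two_le_card_sameFiberPairs_of_card_image_lt ?_
    rw [hcard b hbB]
    exact (card_image_le.trans (hcard b hbB).le).lt_of_ne (hno3 b hbB hbfull)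
  have heq : ∑ b ∈ full, 2 = ∑ b ∈ full, #(sameFiberPairs (·.val % 3) b) := by
    refine le_antisymm (sum_le_sum hle) ?_
    rw [sum_const, smul_eq_mul, hsum_full]
    omega
  intro b hb hfull
  exact ((sum_eq_sum_iff_of_le hle).mp heq b (mem_filter.mpr ⟨hb, hfull⟩)).symm

end ZModThreeMul

theorem cyclic_sts_no_type3_no_type1_general (v : ℕ) [NeZero v]
    (hv : v % 18 = 3 ∨ v % 18 = 15)
    (B : Finset (Finset (ZMod v)))
    (hcard : ∀ b ∈ B, b.card = 3)
    (hpairs : ∀ x y : ZMod v, x ≠ y → ∃! b, b ∈ B ∧ x ∈ b ∧ y ∈ b)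
    (hno3 : ¬ ∃ b ∈ B,
      (Finset.univ.image (fun t : ZMod v => b.image (fun x => x + t))).card = v ∧
      (b.image (fun x : ZMod v => x.val % 3)).card = 3) :
    ∀ b ∈ B,
      (Finset.univ.image (fun t : ZMod v => b.image (fun x => x + t))).card = v →
      (b.image (fun x : ZMod v => x.val % 3)).card = 2 := by
  obtain ⟨m, rfl⟩ : 3 ∣ v := ⟨v / 3, by omega⟩
  have hm3 : m % 3 ≠ 0 := by omega
  push Not at hno3
  intro b hb hfull
  exact card_image_eq_two_of_card_sameFiberPairs_eq_two (hcard b hb)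
    (card_sameFiberPairs_eq_two_of_card_translates_eq hm3 hcard hpairs hno3 b hb hfull)

/-- for v ≡ 3 or 15 (mod 18), a cyclic STS(v) with no full orbit of Type 3
has no full orbit of Type 1: every block lying in a full orbit meets exactly two residue
classes modulo 3. -/
theorem cyclic_sts_no_type3_no_type1 (v : ℕ) [NeZero v]
    (hv : v % 18 = 3 ∨ v % 18 = 15)
    (B : Finset (Finset (ZMod v)))
    (hcard : ∀ b ∈ B, b.card = 3)
    (hpairs : ∀ x y : ZMod v, x ≠ y → ∃! b, b ∈ B ∧ x ∈ b ∧ y ∈ b)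
    (hcyc : ∀ b ∈ B, b.image (fun x => x + 1) ∈ B)
    (hno3 : ¬ ∃ b ∈ B,
      (Finset.univ.image (fun t : ZMod v => b.image (fun x => x + t))).card = v ∧
      (b.image (fun x : ZMod v => x.val % 3)).card = 3) :
    ∀ b ∈ B,
      (Finset.univ.image (fun t : ZMod v => b.image (fun x => x + t))).card = v →
      (b.image (fun x : ZMod v => x.val % 3)).card = 2 :=
  cyclic_sts_no_type3_no_type1_general v hv B hcard hpairs hno3
end

section
/- Every cyclic Steiner triple system STS(v) with v ≡ 9 (mod 18) admits a zero-sum 3-flow, i.e., an assignment of values from {+1, −1, +2, −2} to the blocks such that the values of the blocks through any point sum to zero. -/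
/-!
Write `v = 3m` and `μ = m`, so translation by `μ` has order 3. A block fixed by `μ` is a coset
`{x, x + μ, x + 2μ}`; every other block has a free orbit under translation, and a free orbit
meets each point in exactly 3 blocks. Since each point lies in `(v - 1) / 2 ≡ 1 (mod 3)` blocks,
it lies in exactly one `μ`-fixed block.

Colour `ℤ_v` by residues mod 3. There are `m²` pairs `(x, y)` with `x ≡ 0`, `y ≡ 1`, an odd
number, and a block that misses a residue contains an even number of them; so some block `r₀`
meets all three residues. On the orbit of `r₀` put `f (i + r₀) = 1, 1, -1` according to
`i mod 3`: each point sees `1 + 1 - 1 = 1`. On each other free orbit put a constant sign, chosen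
so that these signs sum to `S ∈ {0, -1}`. Every point then sees `1 + 3S` from the free orbits,
and the `μ`-fixed blocks get `-1 - 3S ∈ {-1, 2}`.
-/

open Finset
open scoped Pointwise

theorem even_card_filter_mul_card_filter {α : Type*} {b : Finset α} (hb : #b = 3)
    {c : α → ZMod 3} (hc : b.image c ≠ univ) :
    Even (#{x ∈ b | c x = 0} * #{x ∈ b | c x = 1}) := by
  obtain ⟨k, hk⟩ : ∃ k, k ∉ b.image c := by simpa [eq_univ_iff_forall] using hc
  have hfib := card_eq_sum_card_fiberwise (f := c) (s := b) (t := univ) fun _ _ => mem_univ _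
  have hk0 : #{x ∈ b | c x = k} = 0 :=
    card_eq_zero.2 <| filter_eq_empty_iff.2 fun x hx hxk => hk (mem_image.2 ⟨x, hx, hxk⟩)
  rw [show (univ : Finset (ZMod 3)) = {0, 1, 2} by decide, sum_insert (by decide),
    sum_pair (by decide), hb] at hfib
  rw [Nat.even_mul, Nat.even_iff, Nat.even_iff]
  obtain rfl | rfl | rfl : k = 0 ∨ k = 1 ∨ k = 2 := by clear hk hk0; revert k; decide
  all_goals omega

theorem exists_signs_sum_eq_zero_or_neg_one {ι : Type*} (s : Finset ι) :
    ∃ g : ι → ℤ, (∀ i ∈ s, g i = 1 ∨ g i = -1) ∧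
      (∑ i ∈ s, g i = 0 ∨ ∑ i ∈ s, g i = -1) := by
  classical
  obtain ⟨t, hts, ht⟩ := exists_subset_card_eq (Nat.div_le_self #s 2)
  refine ⟨fun i => if i ∈ t then 1 else -1, fun i _ => by dsimp only; split_ifs <;> simp, ?_⟩
  have hsplit := card_filter_add_card_filter_not (s := s) (p := (· ∈ t))
  rw [filter_mem_eq_inter, inter_eq_right.2 hts, ht] at hsplit
  rw [sum_ite, sum_const, sum_const, filter_mem_eq_inter, inter_eq_right.2 hts, ht]
  simp only [nsmul_eq_mul, mul_one, mul_neg]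
  omega

theorem sum_sub_eq_sum_univ {α K M : Type*} [AddCommGroup K] [Fintype K] [DecidableEq K]
    [AddCommMonoid M] {c : α → K} {r : Finset α} (hr : r.image c = univ)
    (hcard : #r = Fintype.card K) (y : K) (ψ : K → M) :
    ∑ a ∈ r, ψ (y - c a) = ∑ k, ψ k := by
  have hinj : Set.InjOn c r := injOn_of_card_image_eq (by rw [hr, card_univ, hcard])
  rw [← sum_image (f := fun k => ψ (y - k)) hinj, hr]
  exact Equiv.sum_comp (Equiv.subLeft y) ψ

structure IsSteinerTripleSystem {α : Type*} (B : Finset (Finset α)) : Prop where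
  card_eq_three : ∀ b ∈ B, #b = 3
  existsUnique : ∀ x y : α, x ≠ y → ∃! b, b ∈ B ∧ x ∈ b ∧ y ∈ b

namespace IsSteinerTripleSystem

variable {α : Type*} {B : Finset (Finset α)}

theorem eq_of_mem_of_mem (hB : IsSteinerTripleSystem B) {b b' : Finset α} (hb : b ∈ B)
    (hb' : b' ∈ B) {x y : α} (hxy : x ≠ y) (hx : x ∈ b) (hy : y ∈ b) (hx' : x ∈ b')
    (hy' : y ∈ b') : b = b' :=
  (hB.existsUnique x y hxy).unique ⟨hb, hx, hy⟩ ⟨hb', hx', hy'⟩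

variable [DecidableEq α]

theorem sum_card_inter_mul_card_inter (hB : IsSteinerTripleSystem B) {S T : Finset α}
    (hST : Disjoint S T) : ∑ b ∈ B, #(b ∩ S) * #(b ∩ T) = #S * #T := by
  have hcover : S ×ˢ T = B.biUnion fun b => (b ∩ S) ×ˢ (b ∩ T) := by
    ext ⟨p, q⟩
    simp only [mem_product, mem_biUnion, mem_inter]
    constructor
    · rintro ⟨hp, hq⟩
      obtain ⟨b, ⟨hb, hpb, hqb⟩, -⟩ :=
        hB.existsUnique p q fun h => disjoint_left.1 hST hp (h ▸ hq)
      exact ⟨b, hb, ⟨hpb, hp⟩, hqb, hq⟩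
    · rintro ⟨b, -, ⟨-, hp⟩, -, hq⟩
      exact ⟨hp, hq⟩
  have hdisj : Set.PairwiseDisjoint (B : Set (Finset α)) fun b => (b ∩ S) ×ˢ (b ∩ T) := by
    intro b hb b' hb' hne
    refine disjoint_left.2 fun ⟨p, q⟩ h h' => hne ?_
    simp only [mem_product, mem_inter] at h h'
    have hpq : p ≠ q := fun e => disjoint_left.1 hST h.1.2 (e ▸ h.2.2)
    exact hB.eq_of_mem_of_mem hb hb' hpq h.1.1 h.2.1 h'.1.1 h'.2.1
  rw [← card_product, hcover, card_biUnion hdisj]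
  simp only [card_product]

variable [Fintype α]

theorem two_mul_card_filter_mem (hB : IsSteinerTripleSystem B) (x : α) :
    2 * #{b ∈ B | x ∈ b} = Fintype.card α - 1 := by
  have hcover : (univ : Finset α).erase x = {b ∈ B | x ∈ b}.biUnion (·.erase x) := by
    ext y
    simp only [mem_erase, mem_univ, and_true, mem_biUnion, mem_filter]
    constructor
    · intro hyx
      obtain ⟨b, ⟨hb, hx, hy⟩, -⟩ := hB.existsUnique x y (Ne.symm hyx)
      exact ⟨b, ⟨hb, hx⟩, hyx, hy⟩
    · rintro ⟨b, -, hyx, -⟩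
      exact hyx
  have hdisj : Set.PairwiseDisjoint (({b ∈ B | x ∈ b} : Finset _) : Set (Finset α))
      (·.erase x) := by
    intro b hb b' hb' hne
    rw [mem_coe, mem_filter] at hb hb'
    refine disjoint_left.2 fun y hy hy' => hne ?_
    exact hB.eq_of_mem_of_mem hb.1 hb'.1 (ne_of_mem_erase hy).symm hb.2 (mem_of_mem_erase hy)
      hb'.2 (mem_of_mem_erase hy')
  have := congrArg card hcover
  rw [card_erase_of_mem (mem_univ x), card_univ, card_biUnion hdisj,
    sum_congr rfl fun b hb => by
      rw [card_erase_of_mem (mem_filter.1 hb).2, hB.card_eq_three b (mem_filter.1 hb).1]] at this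
  simp only [sum_const, smul_eq_mul] at this
  omega

theorem exists_image_eq_univ (hB : IsSteinerTripleSystem B) (c : α → ZMod 3)
    (h0 : Odd #{x | c x = 0}) (h1 : Odd #{x | c x = 1}) : ∃ b ∈ B, b.image c = univ := by
  by_contra! h
  have hsum := hB.sum_card_inter_mul_card_inter (S := {x | c x = 0}) (T := {x | c x = 1})
    (disjoint_filter.2 fun x _ hx0 hx1 => by simp [hx0] at hx1)
  simp only [inter_filter, inter_univ] at hsum
  have heven := even_sum _ fun b hb =>
    even_card_filter_mul_card_filter (hB.card_eq_three b hb) (h b hb)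
  rw [hsum] at heven
  exact Nat.not_even_iff_odd.2 (h0.mul h1) heven

end IsSteinerTripleSystem

section Translation

variable {G : Type*} [AddCommGroup G] [DecidableEq G]

theorem add_mem_of_vadd_finset_eq_self {b : Finset G} {t : G} (ht : t +ᵥ b = b) {y : G}
    (hy : y ∈ b) : y + t ∈ b := by
  rw [← ht, add_comm]
  exact vadd_mem_vadd_finset hy

theorem eq_triple_of_vadd_finset_eq_self {b : Finset G} (hb : #b = 3) {t : G} (ht : t +ᵥ b = b)
    (ht2 : t + t ≠ 0) {x : G} (hx : x ∈ b) : b = {x, x + t, x + t + t} := by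
  have ht0 : t ≠ 0 := by rintro rfl; simp at ht2
  have hx1 := add_mem_of_vadd_finset_eq_self ht hx
  refine (eq_of_subset_of_card_le ?_ ?_).symm
  · simp only [insert_subset_iff, singleton_subset_iff]
    exact ⟨hx, hx1, add_mem_of_vadd_finset_eq_self ht hx1⟩
  · rw [hb, card_eq_three.2 ⟨x, x + t, x + t + t, ?_, ?_, ?_, rfl⟩] <;>
      simpa [add_assoc]

theorem add_add_eq_zero_of_vadd_finset_eq_self {b : Finset G} (hb : #b = 3) {t : G}
    (ht : t +ᵥ b = b) (ht2 : t + t ≠ 0) : t + t + t = 0 := by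
  obtain ⟨x, hx⟩ := card_pos.1 (hb ▸ three_pos)
  have hx3 : x + t + t + t ∈ b := by
    repeat apply add_mem_of_vadd_finset_eq_self ht
    exact hx
  rw [eq_triple_of_vadd_finset_eq_self hb ht ht2 hx] at hx3
  simp only [mem_insert, mem_singleton] at hx3
  have ht0 : t ≠ 0 := by rintro rfl; simp at ht2
  rcases hx3 with h | h | h <;> simp_all [add_assoc]

def translationClass (b : Finset G) : AddAction.orbitRel.Quotient G (Finset G) :=
  Quotient.mk'' b

theorem translationClass_eq_iff {b r : Finset G} :
    translationClass b = translationClass r ↔ ∃ i : G, i +ᵥ r = b :=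
  Quotient.eq''.trans AddAction.mem_orbit_iff

theorem translationClass_vadd (i : G) (b : Finset G) :
    translationClass (i +ᵥ b) = translationClass b :=
  translationClass_eq_iff.2 ⟨i, rfl⟩

theorem mem_vadd_finset_iff_sub_mem {b : Finset G} {i x : G} : x ∈ i +ᵥ b ↔ x - i ∈ b := by
  rw [← neg_vadd_mem_iff, vadd_eq_add, neg_add_eq_sub]

theorem vadd_mem_filter_vadd_ne {B : Finset (Finset G)}
    (hB : ∀ b ∈ B, ∀ i : G, i +ᵥ b ∈ B) (t : G) :
    ∀ b ∈ {b ∈ B | ¬t +ᵥ b = b}, ∀ i : G, i +ᵥ b ∈ {b ∈ B | ¬t +ᵥ b = b} := by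
  simp only [mem_filter]
  rintro b ⟨hb, ht⟩ i
  refine ⟨hB b hb i, fun h => ht ?_⟩
  rwa [vadd_comm, vadd_left_cancel_iff] at h

variable {N : Finset (Finset G)}

open scoped Classical in
theorem filter_translationClass_eq_image (hN : ∀ b ∈ N, ∀ i : G, i +ᵥ b ∈ N)
    {r : Finset G} (hr : r ∈ N) (x : G) :
    {b ∈ {b ∈ N | x ∈ b} | translationClass b = translationClass r} =
      r.image fun a => (x - a) +ᵥ r := by
  ext b
  simp only [mem_filter, mem_image, translationClass_eq_iff]
  constructor
  · rintro ⟨⟨-, hxb⟩, i, rfl⟩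
    exact ⟨x - i, mem_vadd_finset_iff_sub_mem.1 hxb, by rw [sub_sub_cancel]⟩
  · rintro ⟨a, ha, rfl⟩
    exact ⟨⟨hN r hr _, mem_vadd_finset_iff_sub_mem.2 (by rwa [sub_sub_cancel])⟩, _, rfl⟩

open scoped Classical in
theorem sum_filter_translationClass_eq {M : Type*} [AddCommMonoid M]
    (hN : ∀ b ∈ N, ∀ i : G, i +ᵥ b ∈ N) {r : Finset G} (hr : r ∈ N)
    (hfree : Function.Injective (· +ᵥ r : G → Finset G)) (x : G) (F : Finset G → M) :
    ∑ b ∈ {b ∈ N | x ∈ b} with translationClass b = translationClass r, F b =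
      ∑ a ∈ r, F ((x - a) +ᵥ r) := by
  rw [filter_translationClass_eq_image hN hr,
    sum_image fun a _ a' _ h => sub_right_injective (hfree h)]

open scoped Classical in
theorem card_filter_mem_eq_three_mul (hN : ∀ b ∈ N, ∀ i : G, i +ᵥ b ∈ N)
    (hfree : ∀ r ∈ N, Function.Injective (· +ᵥ r : G → Finset G))
    (hcard : ∀ r ∈ N, #r = 3) (x : G) :
    #{b ∈ N | x ∈ b} = 3 * #(N.image translationClass) := by
  rw [card_eq_sum_card_fiberwise (f := translationClass) (t := N.image translationClass)
    fun b hb => mem_image_of_mem _ (mem_filter.1 hb).1, mul_comm, ← smul_eq_mul, ← sum_const]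
  refine sum_congr rfl fun q hq => ?_
  obtain ⟨r, hr, rfl⟩ := mem_image.1 hq
  rw [card_eq_sum_ones, sum_filter_translationClass_eq hN hr (hfree r hr), ← card_eq_sum_ones,
    hcard r hr]

open scoped Classical in
theorem exists_flow_on_free_orbits [Fintype G] (hN : ∀ b ∈ N, ∀ i : G, i +ᵥ b ∈ N)
    (hfree : ∀ r ∈ N, Function.Injective (· +ᵥ r : G → Finset G))
    (hcard : ∀ r ∈ N, #r = 3) (c : G →+ ZMod 3) {r₀ : Finset G} (hr₀ : r₀ ∈ N)
    (hc : r₀.image c = univ) :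
    ∃ F : Finset G → ℤ, ∃ S : ℤ, (S = 0 ∨ S = -1) ∧
      (∀ b ∈ N, F b = 1 ∨ F b = -1) ∧
      ∀ x, ∑ b ∈ N with x ∈ b, F b = 1 + 3 * S := by
  let φ : ZMod 3 → ℤ := ![1, 1, -1]
  set Q := (N.image translationClass).erase (translationClass r₀)
  obtain ⟨g, hg, hS⟩ := exists_signs_sum_eq_zero_or_neg_one Q
  -- `F (i +ᵥ r₀) = φ (c i)`, written as a sum over `i` so that no choice of `i` is made.
  let F : Finset G → ℤ := fun b =>
    if translationClass b = translationClass r₀ then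
      ∑ i, if i +ᵥ r₀ = b then φ (c i) else 0
    else g (translationClass b)
  have hF₀ : ∀ i, F (i +ᵥ r₀) = φ (c i) := by
    intro i
    simp only [F, translationClass_vadd, if_true, (hfree r₀ hr₀).eq_iff, sum_ite_eq', mem_univ]
  have hF : ∀ b, translationClass b ≠ translationClass r₀ → F b = g (translationClass b) :=
    fun b h => if_neg h
  refine ⟨F, ∑ q ∈ Q, g q, hS, fun b hb => ?_, fun x => ?_⟩
  · by_cases h : translationClass b = translationClass r₀
    · obtain ⟨i, rfl⟩ := translationClass_eq_iff.1 h
      rw [hF₀]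
      generalize c i = k
      fin_cases k <;> simp [φ]
    · rw [hF b h]
      exact hg _ (mem_erase.2 ⟨h, mem_image_of_mem _ hb⟩)
  rw [← sum_fiberwise_of_maps_to (g := translationClass) (t := N.image translationClass)
      fun b hb => mem_image_of_mem _ (mem_filter.1 hb).1,
    ← add_sum_erase _ _ (mem_image_of_mem _ hr₀),
    sum_filter_translationClass_eq hN hr₀ (hfree _ hr₀), mul_sum]
  congr 1
  · simp only [hF₀, map_sub]
    rw [sum_sub_eq_sum_univ hc (by rw [hcard r₀ hr₀, ZMod.card])]
    rfl
  · refine sum_congr rfl fun q hq => ?_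
    obtain ⟨r, hr, rfl⟩ := mem_image.1 (mem_of_mem_erase hq)
    rw [sum_filter_translationClass_eq hN hr (hfree r hr)]
    simp [hF, translationClass_vadd, ne_of_mem_erase hq, hcard r hr]

end Translation

namespace ZMod

variable {v : ℕ}

theorem eq_zero_of_add_self_eq_zero (hv : Odd v) {t : ZMod v} (h : t + t = 0) : t = 0 := by
  have := (neg_eq_self_iff t).1 (neg_eq_iff_add_eq_zero.2 h)
  rw [Nat.odd_iff] at hv
  exact this.resolve_right (by omega)

variable [NeZero v]

theorem vadd_mem_of_image_add_one_mem {B : Finset (Finset (ZMod v))}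
    (h : ∀ b ∈ B, b.image (· + 1) ∈ B) : ∀ b ∈ B, ∀ i : ZMod v, i +ᵥ b ∈ B := by
  suffices ∀ n : ℕ, ∀ b ∈ B, (n : ZMod v) +ᵥ b ∈ B from
    fun b hb i => natCast_zmod_val i ▸ this i.val b hb
  intro n
  induction n with
  | zero => intro b hb; simpa using hb
  | succ n ih =>
    intro b hb
    convert h _ (ih b hb) using 1
    rw [← image_vadd, ← image_vadd, image_image]
    congr 1
    ext x
    simp only [Function.comp_apply, vadd_eq_add, Nat.cast_succ]
    ring

theorem eq_zero_or_eq_or_eq_of_add_add_eq_zero {m : ℕ} (hvm : v = 3 * m) {t : ZMod v}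
    (h : t + t + t = 0) : t = 0 ∨ t = m ∨ t = m + m := by
  rw [← natCast_zmod_val t] at h ⊢
  have hdvd : v ∣ 3 * t.val := by
    rw [← natCast_eq_zero_iff]
    push_cast
    linear_combination h
  obtain ⟨k, hk⟩ : m ∣ t.val := Nat.dvd_of_mul_dvd_mul_left three_pos (hvm ▸ hdvd)
  have hk3 : k < 3 := by
    have := val_lt t
    subst hvm
    nlinarith
  interval_cases k <;> simp [hk, mul_two]

theorem vadd_injective_of_vadd_ne_self (hv : Odd v) {m : ℕ} (hvm : v = 3 * m)
    {b : Finset (ZMod v)} (hb : #b = 3) (hμ : (m : ZMod v) +ᵥ b ≠ b) :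
    Function.Injective (· +ᵥ b : ZMod v → Finset (ZMod v)) := by
  intro i j hij
  have ht : (i - j) ∈ AddAction.stabilizer (ZMod v) b := by
    rw [AddAction.mem_stabilizer_iff, sub_eq_neg_add, ← vadd_vadd]
    exact (congrArg (-j +ᵥ ·) hij).trans (neg_vadd_vadd j b)
  by_contra hne
  have h2 : (i - j) + (i - j) ≠ 0 := fun h => sub_ne_zero.2 hne (eq_zero_of_add_self_eq_zero hv h)
  have h3 : ((3 * m : ℕ) : ZMod v) = 0 := hvm ▸ natCast_self v
  push_cast at h3
  apply hμ
  rcases eq_zero_or_eq_or_eq_of_add_add_eq_zero hvm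
    (add_add_eq_zero_of_vadd_finset_eq_self hb ht h2) with h | h | h
  · exact absurd h (sub_ne_zero.2 hne)
  · exact h ▸ ht
  · have := (AddAction.stabilizer (ZMod v) b).add_mem ht ht
    rwa [h, show (m + m + (m + m) : ZMod v) = m by linear_combination h3] at this

theorem eq_triple_of_vadd_eq_self (hv : Odd v) {m : ℕ} (hvm : v = 3 * m) {b : Finset (ZMod v)}
    (hb : #b = 3) (hμ : (m : ZMod v) +ᵥ b = b) {x : ZMod v} (hx : x ∈ b) :
    b = {x, x + m, x + m + m} := by
  refine eq_triple_of_vadd_finset_eq_self hb hμ (fun h => ?_) hx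
  have hv0 := NeZero.ne v
  have hdvd := (natCast_eq_zero_iff m v).1 (eq_zero_of_add_self_eq_zero hv h)
  have := Nat.le_of_dvd (Nat.pos_of_ne_zero ?_) hdvd
  all_goals omega

theorem card_filter_castHom_eq {n : ℕ} [NeZero n] (h : n ∣ v) (k : ZMod n) :
    #{y : ZMod v | castHom h (ZMod n) y = k} = v / n := by
  have hsum := card_eq_sum_card_fiberwise (f := castHom h (ZMod n)) (s := univ) (t := univ)
    fun _ _ => mem_univ _
  rw [sum_congr rfl fun j _ => AddMonoidHom.card_fiber_eq_of_mem_range (castHom h (ZMod n))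
    (castHom_surjective h j) (castHom_surjective h k), sum_const, card_univ, card_univ, card,
    card, smul_eq_mul] at hsum
  exact (Nat.div_eq_of_eq_mul_left (Nat.pos_of_ne_zero (NeZero.ne n))
    (hsum.trans (mul_comm _ _))).symm

variable {B : Finset (Finset (ZMod v))}

theorem vadd_injective_of_mem_filter_vadd_ne (hB : IsSteinerTripleSystem B) (hv : Odd v)
    {m : ℕ} (hvm : v = 3 * m) :
    ∀ r ∈ {b ∈ B | ¬(m : ZMod v) +ᵥ b = b},
      Function.Injective (· +ᵥ r : ZMod v → Finset (ZMod v)) := fun r hr =>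
  vadd_injective_of_vadd_ne_self hv hvm (hB.card_eq_three r (mem_filter.1 hr).1)
    (mem_filter.1 hr).2

theorem card_filter_vadd_eq_self_eq_one (hB : IsSteinerTripleSystem B)
    (hcl : ∀ b ∈ B, ∀ i : ZMod v, i +ᵥ b ∈ B) (hv : Odd v) {m : ℕ} (hvm : v = 3 * m)
    (x : ZMod v) : #{b ∈ {b ∈ B | x ∈ b} | (m : ZMod v) +ᵥ b = b} = 1 := by
  have hrep := hB.two_mul_card_filter_mem x
  have hsplit := card_filter_add_card_filter_not (s := {b ∈ B | x ∈ b})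
    (p := fun b => (m : ZMod v) +ᵥ b = b)
  rw [filter_comm (fun b => x ∈ b) (fun b => ¬(m : ZMod v) +ᵥ b = b),
    card_filter_mem_eq_three_mul (vadd_mem_filter_vadd_ne hcl _)
      (vadd_injective_of_mem_filter_vadd_ne hB hv hvm)
      (fun r hr => hB.card_eq_three r (mem_filter.1 hr).1)] at hsplit
  have hshort : #{b ∈ {b ∈ B | x ∈ b} | (m : ZMod v) +ᵥ b = b} ≤ 1 := by
    refine card_le_one.2 fun b hb b' hb' => ?_
    simp only [mem_filter] at hb hb'
    rw [eq_triple_of_vadd_eq_self hv hvm (hB.card_eq_three b hb.1.1) hb.2 hb.1.2,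
      eq_triple_of_vadd_eq_self hv hvm (hB.card_eq_three b' hb'.1.1) hb'.2 hb'.1.2]
  rw [card] at hrep
  have := NeZero.ne v
  omega

theorem vadd_ne_self_of_image_eq_univ (hv : Odd v) {m : ℕ} (hvm : v = 3 * m) (h3m : 3 ∣ m)
    {r : Finset (ZMod v)} (hr : #r = 3) (hc : r.image (castHom ⟨m, hvm⟩ (ZMod 3)) = univ) :
    (m : ZMod v) +ᵥ r ≠ r := by
  intro h
  obtain ⟨x, hx⟩ := card_pos.1 (hr ▸ three_pos)
  have hcm : castHom ⟨m, hvm⟩ (ZMod 3) (m : ZMod v) = 0 := by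
    rw [map_natCast, natCast_eq_zero_iff]
    exact h3m
  rw [eq_triple_of_vadd_eq_self hv hvm hr h hx] at hc
  have := congrArg Finset.card hc
  simp only [image_insert, image_singleton, map_add, hcm, add_zero, insert_eq_of_mem,
    mem_singleton, card_singleton, card_univ, card] at this
  omega

end ZMod

/-- every cyclic STS(v) with v ≡ 9 (mod 18) admits a zero-sum 3-flow. -/
theorem cyclic_sts_9_mod_18_zero_sum_3_flow (v : ℕ) [NeZero v] (hv : v % 18 = 9)
    (B : Finset (Finset (ZMod v)))
    (hcard : ∀ b ∈ B, b.card = 3)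
    (hpairs : ∀ x y : ZMod v, x ≠ y → ∃! b, b ∈ B ∧ x ∈ b ∧ y ∈ b)
    (hcyc : ∀ b ∈ B, b.image (fun x => x + 1) ∈ B) :
    ∃ f : Finset (ZMod v) → ℤ,
      (∀ b ∈ B, f b = 1 ∨ f b = -1 ∨ f b = 2 ∨ f b = -2) ∧
      ∀ x : ZMod v, ∑ b ∈ B.filter (fun b => x ∈ b), f b = 0 := by
  obtain ⟨m, hvm, hm, h3m⟩ : ∃ m, v = 3 * m ∧ Odd m ∧ 3 ∣ m :=
    ⟨v / 3, by omega, Nat.odd_iff.2 (by omega), by omega⟩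
  have hvodd : Odd v := Nat.odd_iff.2 (by omega)
  have hB : IsSteinerTripleSystem B := ⟨hcard, hpairs⟩
  have hcl := ZMod.vadd_mem_of_image_add_one_mem hcyc
  let c := ZMod.castHom ⟨m, hvm⟩ (ZMod 3)
  have hc : ∀ k, Odd #{y | c y = k} := fun k => by
    rwa [ZMod.card_filter_castHom_eq, hvm, Nat.mul_div_cancel_left _ three_pos]
  obtain ⟨r₀, hr₀, hr₀c⟩ := hB.exists_image_eq_univ c (hc 0) (hc 1)
  have hr₀N : r₀ ∈ {b ∈ B | ¬(m : ZMod v) +ᵥ b = b} :=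
    mem_filter.2 ⟨hr₀, ZMod.vadd_ne_self_of_image_eq_univ hvodd hvm h3m (hcard r₀ hr₀)
      hr₀c⟩
  obtain ⟨F, S, hS, hF, hFsum⟩ := exists_flow_on_free_orbits (vadd_mem_filter_vadd_ne hcl _)
    (ZMod.vadd_injective_of_mem_filter_vadd_ne hB hvodd hvm)
    (fun r hr => hcard r (mem_filter.1 hr).1) c.toAddMonoidHom hr₀N hr₀c
  refine ⟨fun b => if (m : ZMod v) +ᵥ b = b then -1 - 3 * S else F b, fun b hb => ?_,
    fun x => ?_⟩
  · dsimp only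
    split_ifs with h
    · omega
    · rcases hF b (mem_filter.2 ⟨hb, h⟩) with h | h <;> simp [h]
  · rw [← sum_filter_add_sum_filter_not _ (fun b => (m : ZMod v) +ᵥ b = b),
      sum_ite_of_true fun b hb => (mem_filter.1 hb).2,
      sum_ite_of_false fun b hb => (mem_filter.1 hb).2, sum_const,
      ZMod.card_filter_vadd_eq_self_eq_one hB hcl hvodd hvm, filter_comm, hFsum]
    ring
end

section
/- Every cyclic Steiner triple system STS(v) with v ≡ 3 or 15 (mod 18) and v > 3 admits a zero-sum 4-flow, i.e., an assignment of values from {±1, ±2, ±3} to the blocks such that the values of the blocks through any point sum to zero. -/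
/-!
A 3-subset of a finite abelian group is either moved by every nonzero translation, and then each
point lies on exactly 3 of its translates, or it is fixed by an element of order 3, and then each
point lies on exactly one. In a cyclic group the fixed 3-subsets are the cosets of the unique
subgroup of order 3, so there is at most one short orbit. Counting the `(v - 1) / 2` blocks through
a point gives `(v - 1) / 2 = #short + 3 * #full`; for `v ≡ 3 (mod 6)`, `v > 3`, this forces one
short orbit and at least one full orbit. Weight `-3` on the short orbit and weights `±1, ±2` with
sum `1` on the full orbits then make every point sum `-3 + 3 * 1 = 0`.
-/

open Finset Pointwise

namespace CyclicDesign

lemma exists_sum_eq_one {ι : Type*} [DecidableEq ι] {s : Finset ι} (hs : s.Nonempty) :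
    ∃ c : ι → ℤ, (∀ i ∈ s, c i ≠ 0 ∧ |c i| ≤ 2) ∧ ∑ i ∈ s, c i = 1 := by
  induction hs using Nonempty.cons_induction with
  | singleton a => exact ⟨fun _ => 1, by simp⟩
  | cons a s ha _ ih =>
    obtain ⟨c, hc, hsum⟩ := ih
    refine ⟨Function.update (-c) a 2, fun i hi => ?_, ?_⟩
    · rcases mem_cons.mp hi with rfl | hi
      · simp
      · simpa [Function.update_of_ne (ne_of_mem_of_not_mem hi ha)] using hc i hi
    · rw [sum_cons, Function.update_self, sum_congr rfl fun i hi =>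
        Function.update_of_ne (ne_of_mem_of_not_mem hi ha) _ _]
      simp [hsum]

section Vadd

variable {G : Type*} [AddCommGroup G] [DecidableEq G]

def IsShort (b : Finset G) : Prop := ∃ s : G, s ≠ 0 ∧ s +ᵥ b = b

lemma card_nsmul_eq_zero_of_vadd_eq {s : G} {b : Finset G} (h : s +ᵥ b = b) : #b • s = 0 := by
  have hsum := congrArg (fun c => ∑ z ∈ c, z) h
  simp only [← image_vadd, sum_image fun _ _ _ _ => add_left_cancel, vadd_eq_add] at hsum
  rwa [sum_add_distrib, sum_const, add_eq_right] at hsum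

lemma eq_vadd_of_vadd_eq {b : Finset G} (hb : #b = 3) {s : G} (hs : s ≠ 0) (h : s +ᵥ b = b)
    {y : G} (hy : y ∈ b) : b = y +ᵥ ({0, s, s + s} : Finset G) := by
  have h3 : 3 • s = 0 := hb ▸ card_nsmul_eq_zero_of_vadd_eq h
  have hss : s + s ≠ 0 := fun h2 => hs <| by rwa [succ_nsmul, two_nsmul, h2, zero_add] at h3
  have hstep : ∀ z ∈ b, s + z ∈ b := fun z hz => h ▸ vadd_mem_vadd_finset hz
  symm
  apply eq_of_subset_of_card_le
  · intro z hz
    simp only [mem_vadd_finset, mem_insert, mem_singleton] at hz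
    obtain ⟨w, rfl | rfl | rfl, rfl⟩ := hz
    · simpa using hy
    · simpa [add_comm] using hstep y hy
    · convert hstep _ (hstep y hy) using 1
      rw [vadd_eq_add]
      abel
  · have hs' : s ≠ s + s := fun h' => hs (left_eq_add.mp h')
    rw [hb, card_vadd_finset, card_insert_of_notMem (by simp [hs.symm, hss.symm]), card_pair hs']

lemma mem_vadd_finset_iff_sub_mem {t x : G} {b : Finset G} : x ∈ t +ᵥ b ↔ x - t ∈ b := by
  rw [← neg_vadd_mem_iff, vadd_eq_add, neg_add_eq_sub]

lemma isShort_vadd_iff (t : G) {b : Finset G} : IsShort (t +ᵥ b) ↔ IsShort b := by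
  simp only [IsShort, vadd_comm _ t, vadd_left_cancel_iff]

lemma IsShort.vadd_eq_self {b : Finset G} (hb : #b = 3) (hsh : IsShort b) {y z : G} (hy : y ∈ b)
    (hz : z ∈ b) : (z - y) +ᵥ b = b := by
  obtain ⟨s, hs, h⟩ := hsh
  rw [eq_vadd_of_vadd_eq hb hs h hy] at hz
  obtain ⟨w, hw, rfl⟩ := mem_vadd_finset.mp hz
  simp only [mem_insert, mem_singleton] at hw
  rcases hw with rfl | rfl | rfl <;> simp [add_vadd, h]

end Vadd

section Translates

variable {G : Type*} [AddCommGroup G] [Fintype G] [DecidableEq G]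

def translates (b : Finset G) : Finset (Finset G) := univ.image fun t : G => t +ᵥ b

instance : DecidablePred (IsShort (G := G)) := fun _ => by unfold IsShort; infer_instance

lemma mem_translates {b c : Finset G} : c ∈ translates b ↔ ∃ t : G, t +ᵥ b = c := by
  simp [translates]

lemma translates_vadd (t : G) (b : Finset G) : translates (t +ᵥ b) = translates b := by
  ext c
  simp only [mem_translates, vadd_vadd]
  exact ⟨fun ⟨u, hu⟩ => ⟨u + t, hu⟩, fun ⟨u, hu⟩ => ⟨u - t, by simpa using hu⟩⟩

lemma filter_mem_translates (b : Finset G) (x : G) :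
    {c ∈ translates b | x ∈ c} = b.image fun y => (x - y) +ᵥ b := by
  ext c
  simp only [mem_filter, mem_translates, mem_image]
  constructor
  · rintro ⟨⟨t, rfl⟩, hx⟩
    exact ⟨x - t, mem_vadd_finset_iff_sub_mem.mp hx, by simp⟩
  · rintro ⟨y, hy, rfl⟩
    exact ⟨⟨_, rfl⟩, mem_vadd_finset_iff_sub_mem.mpr (by simpa using hy)⟩

lemma card_filter_mem_translates {b : Finset G} (hb : #b = 3) (x : G) :
    #{c ∈ translates b | x ∈ c} = if IsShort b then 1 else 3 := by
  rw [filter_mem_translates]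
  split_ifs with hsh
  · refine le_antisymm (card_le_one.mpr ?_) (card_pos.mpr ((card_pos.mp (by omega)).image _))
    simp only [mem_image]
    rintro _ ⟨z, hz, rfl⟩ _ ⟨z', hz', rfl⟩
    calc (x - z) +ᵥ b = (x - z) +ᵥ ((z - z') +ᵥ b) := by rw [hsh.vadd_eq_self hb hz' hz]
      _ = (x - z') +ᵥ b := by rw [vadd_vadd, sub_add_sub_cancel]
  · rw [card_image_of_injOn, hb]
    intro y hy z hz hyz
    by_contra hne
    refine hsh ⟨y - z, sub_ne_zero.mpr hne, ?_⟩
    simpa [vadd_vadd] using (congrArg ((y - x) +ᵥ ·) hyz).symm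

lemma sum_filter_mem_translates {M : Type*} [AddCommMonoid M] {C : Finset (Finset G)}
    (hC : ∀ t : G, ∀ b ∈ C, t +ᵥ b ∈ C) {k : ℕ}
    (hk : ∀ b ∈ C, ∀ x : G, #{c ∈ translates b | x ∈ c} = k) (φ : Finset (Finset G) → M) (x : G) :
    ∑ b ∈ C with x ∈ b, φ (translates b) = k • ∑ o ∈ C.image translates, φ o := by
  rw [← sum_fiberwise_of_maps_to' (t := C.image translates)
    (fun b hb => mem_image_of_mem _ (mem_filter.mp hb).1), smul_sum]
  refine sum_congr rfl fun o ho => ?_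
  obtain ⟨b₀, hb₀, rfl⟩ := mem_image.mp ho
  have hfiber : {b ∈ {b ∈ C | x ∈ b} | translates b = translates b₀} =
       {c ∈ translates b₀ | x ∈ c} := by
    ext c
    simp only [mem_filter, mem_translates]
    constructor
    · rintro ⟨⟨-, hx⟩, hc⟩
      exact ⟨mem_translates.mp (hc ▸ mem_translates.mpr ⟨0, zero_vadd G c⟩), hx⟩
    · rintro ⟨⟨t, rfl⟩, hx⟩
      exact ⟨⟨hC t b₀ hb₀, hx⟩, translates_vadd t b₀⟩
  rw [hfiber, sum_const, hk b₀ hb₀ x]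

def shortOrbits (B : Finset (Finset G)) : Finset (Finset (Finset G)) :=
  {b ∈ B | IsShort b}.image translates

def fullOrbits (B : Finset (Finset G)) : Finset (Finset (Finset G)) :=
  {b ∈ B | ¬IsShort b}.image translates

variable {B : Finset (Finset G)}

lemma sum_filter_mem_eq {M : Type*} [AddCommMonoid M] (hB3 : ∀ b ∈ B, #b = 3)
    (hBt : ∀ t : G, ∀ b ∈ B, t +ᵥ b ∈ B) (φ ψ : Finset (Finset G) → M) (x : G) :
    ∑ b ∈ B with x ∈ b, (if IsShort b then φ (translates b) else ψ (translates b)) =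
      ∑ o ∈ shortOrbits B, φ o + 3 • ∑ o ∈ fullOrbits B, ψ o := by
  rw [← sum_filter_add_sum_filter_not _ IsShort, filter_comm, filter_comm (p := fun b => x ∈ b)]
  have hBs (t : G) : ∀ b ∈ {b ∈ B | IsShort b}, t +ᵥ b ∈ {b ∈ B | IsShort b} := fun b hb => by
    rw [mem_filter] at hb ⊢
    exact ⟨hBt t b hb.1, (isShort_vadd_iff t).mpr hb.2⟩
  have hBf (t : G) : ∀ b ∈ {b ∈ B | ¬IsShort b}, t +ᵥ b ∈ {b ∈ B | ¬IsShort b} := fun b hb => by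
    rw [mem_filter] at hb ⊢
    exact ⟨hBt t b hb.1, (isShort_vadd_iff t).not.mpr hb.2⟩
  have hshort := sum_filter_mem_translates hBs (k := 1) (fun b hb x => by
    rw [mem_filter] at hb
    rw [card_filter_mem_translates (hB3 b hb.1), if_pos hb.2]) φ x
  have hfull := sum_filter_mem_translates hBf (k := 3) (fun b hb x => by
    rw [mem_filter] at hb
    rw [card_filter_mem_translates (hB3 b hb.1), if_neg hb.2]) ψ x
  rw [one_smul] at hshort
  rw [shortOrbits, fullOrbits, ← hshort, ← hfull]
  congr 1 <;> refine sum_congr rfl fun b hb => ?_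
  · rw [if_pos (mem_filter.mp (mem_filter.mp hb).1).2]
  · rw [if_neg (mem_filter.mp (mem_filter.mp hb).1).2]

lemma card_filter_mem_eq (hB3 : ∀ b ∈ B, #b = 3) (hBt : ∀ t : G, ∀ b ∈ B, t +ᵥ b ∈ B) (x : G) :
    #{b ∈ B | x ∈ b} = #(shortOrbits B) + 3 * #(fullOrbits B) := by
  have h := sum_filter_mem_eq (M := ℕ) hB3 hBt (fun _ => 1) (fun _ => 1) x
  simp only [ite_self, sum_const, smul_eq_mul, mul_one] at h
  exact h

lemma translates_eq_of_isShort [IsAddCyclic G] {b : Finset G} (hb : #b = 3) (hsh : IsShort b) :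
    translates b = translates ({a : G | 3 • a = 0} : Finset G) := by
  obtain ⟨s, hs, h⟩ := hsh
  obtain ⟨y, hy⟩ := card_pos.mp (by omega : 0 < #b)
  have hb' := eq_vadd_of_vadd_eq hb hs h hy
  have h3 : 3 • s = 0 := hb ▸ card_nsmul_eq_zero_of_vadd_eq h
  have hH : ({0, s, s + s} : Finset G) = ({a : G | 3 • a = 0} : Finset G) := by
    apply eq_of_subset_of_card_le
    · intro a ha
      simp only [mem_insert, mem_singleton] at ha
      rcases ha with rfl | rfl | rfl <;> simp [h3]
    · rw [← card_vadd_finset y ({0, s, s + s} : Finset G), ← hb', hb]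
      convert IsAddCyclic.card_nsmul_eq_zero_le (α := G) three_pos
  rw [hb', hH, translates_vadd]

lemma card_shortOrbits_le_one [IsAddCyclic G] (hB3 : ∀ b ∈ B, #b = 3) : #(shortOrbits B) ≤ 1 := by
  refine card_le_one.mpr fun o₁ ho₁ o₂ ho₂ => ?_
  obtain ⟨b₁, hb₁, rfl⟩ := mem_image.mp ho₁
  obtain ⟨b₂, hb₂, rfl⟩ := mem_image.mp ho₂
  rw [mem_filter] at hb₁ hb₂
  rw [translates_eq_of_isShort (hB3 _ hb₁.1) hb₁.2, translates_eq_of_isShort (hB3 _ hb₂.1) hb₂.2]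

theorem exists_zero_sum_flow (hB3 : ∀ b ∈ B, #b = 3)
    (hBt : ∀ t : G, ∀ b ∈ B, t +ᵥ b ∈ B) (hshort : #(shortOrbits B) = 1)
    (hfull : (fullOrbits B).Nonempty) :
    ∃ f : Finset G → ℤ, (∀ b ∈ B, f b ≠ 0 ∧ |f b| ≤ 3) ∧ ∀ x : G, ∑ b ∈ B with x ∈ b, f b = 0 := by
  obtain ⟨c, hc, hsum⟩ := exists_sum_eq_one hfull
  refine ⟨fun b => if IsShort b then -3 else c (translates b), fun b hb => ?_, fun x => ?_⟩
  · dsimp only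
    split_ifs with hsh
    · norm_num
    · have := hc _ (mem_image_of_mem _ (mem_filter.mpr ⟨hb, hsh⟩))
      exact ⟨this.1, this.2.trans (by norm_num)⟩
  · refine (sum_filter_mem_eq hB3 hBt (fun _ => -3) c x).trans ?_
    rw [sum_const, hshort, hsum]
    rfl

end Translates

lemma two_mul_card_filter_mem {α : Type*} [Fintype α] [DecidableEq α] {B : Finset (Finset α)}
    (hB3 : ∀ b ∈ B, #b = 3) (hpairs : ∀ x y : α, x ≠ y → ∃! b, b ∈ B ∧ x ∈ b ∧ y ∈ b) (x : α) :
    2 * #{b ∈ B | x ∈ b} = Fintype.card α - 1 := by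
  have hunion : univ.erase x = {b ∈ B | x ∈ b}.biUnion fun b => b.erase x := by
    ext y
    simp only [mem_erase, mem_univ, and_true, mem_biUnion, mem_filter]
    refine ⟨fun hy => ?_, fun ⟨_, _, hy, _⟩ => hy⟩
    obtain ⟨b, ⟨hb, hxb, hyb⟩, -⟩ := hpairs x y (Ne.symm hy)
    exact ⟨b, ⟨hb, hxb⟩, hy, hyb⟩
  have hdisj : (({b ∈ B | x ∈ b} : Finset _) : Set (Finset α)).PairwiseDisjoint
      fun b => b.erase x := by
    intro b₁ hb₁ b₂ hb₂ hne
    rw [mem_coe, mem_filter] at hb₁ hb₂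
    refine disjoint_left.mpr fun y hy₁ hy₂ => hne ?_
    rw [mem_erase] at hy₁ hy₂
    exact (hpairs x y (Ne.symm hy₁.1)).unique ⟨hb₁.1, hb₁.2, hy₁.2⟩ ⟨hb₂.1, hb₂.2, hy₂.2⟩
  have hcard := congrArg card hunion
  rw [card_erase_of_mem (mem_univ x), card_univ, card_biUnion hdisj] at hcard
  have hsum : ∑ b ∈ B with x ∈ b, #(b.erase x) = ∑ b ∈ B with x ∈ b, 2 :=
    sum_congr rfl fun b hb => by
      rw [mem_filter] at hb
      rw [card_erase_of_mem hb.2, hB3 b hb.1]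
  rw [hcard, hsum, sum_const, smul_eq_mul, mul_comm]

lemma vadd_mem_of_image_add_one_mem {v : ℕ} [NeZero v] {B : Finset (Finset (ZMod v))}
    (h : ∀ b ∈ B, b.image (fun x => x + 1) ∈ B) (t : ZMod v) : ∀ b ∈ B, t +ᵥ b ∈ B := by
  have h₁ : ∀ b ∈ B, (1 : ZMod v) +ᵥ b ∈ B := fun b hb => by
    simpa only [← image_vadd, vadd_eq_add, add_comm (1 : ZMod v)] using h b hb
  obtain ⟨n, rfl⟩ := ZMod.natCast_zmod_surjective t
  induction n with
  | zero => simp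
  | succ n ih =>
    intro b hb
    rw [Nat.cast_succ, add_comm, ← vadd_vadd]
    exact h₁ _ (ih b hb)

end CyclicDesign

open CyclicDesign

theorem cyclic_sts_3_15_mod_18_zero_sum_4_flow_general (v : ℕ)
    (hv : v % 18 = 3 ∨ v % 18 = 15) (hv3 : 3 < v)
    (B : Finset (Finset (ZMod v)))
    (hcard : ∀ b ∈ B, b.card = 3)
    (hpairs : ∀ x y : ZMod v, x ≠ y → ∃! b, b ∈ B ∧ x ∈ b ∧ y ∈ b)
    (hcyc : ∀ b ∈ B, b.image (fun x => x + 1) ∈ B) :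
    ∃ f : Finset (ZMod v) → ℤ,
      (∀ b ∈ B, f b ≠ 0 ∧ |f b| ≤ 3) ∧
      ∀ x : ZMod v, ∑ b ∈ B.filter (fun b => x ∈ b), f b = 0 := by
  have : NeZero v := ⟨by omega⟩
  have hBt := vadd_mem_of_image_add_one_mem hcyc
  have hr := two_mul_card_filter_mem hcard hpairs 0
  rw [ZMod.card, card_filter_mem_eq hcard hBt] at hr
  have hS := card_shortOrbits_le_one hcard
  apply exists_zero_sum_flow hcard hBt
  · omega
  · exact card_pos.mp (by omega)

/-- every cyclic STS(v) with v ≡ 3 or 15 (mod 18), v > 3, admits a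
zero-sum 4-flow (values in {±1, ±2, ±3}). -/
theorem cyclic_sts_3_15_mod_18_zero_sum_4_flow (v : ℕ) [NeZero v]
    (hv : v % 18 = 3 ∨ v % 18 = 15) (hv3 : 3 < v)
    (B : Finset (Finset (ZMod v)))
    (hcard : ∀ b ∈ B, b.card = 3)
    (hpairs : ∀ x y : ZMod v, x ≠ y → ∃! b, b ∈ B ∧ x ∈ b ∧ y ∈ b)
    (hcyc : ∀ b ∈ B, b.image (fun x => x + 1) ∈ B) :
    ∃ f : Finset (ZMod v) → ℤ,
      (∀ b ∈ B, f b ≠ 0 ∧ |f b| ≤ 3) ∧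
      ∀ x : ZMod v, ∑ b ∈ B.filter (fun b => x ∈ b), f b = 0 :=
  cyclic_sts_3_15_mod_18_zero_sum_4_flow_general v hv hv3 B hcard hpairs hcyc
end

section
/- Let n ≥ 3. The complete bipartite graph K_{n,n} admits a 1-factorization into n perfect matchings together with an assignment of values from {±1, ±2} to its edges such that the values at every vertex sum to zero and the values within each perfect matching sum to zero. If moreover n is even and n ≠ 6, the values can be taken from {±1}. -/
/-!
For odd `n` take the cyclic Latin square `M k i = i + k` on `Fin n` and give the edge `(i, j)`
the weight `g (i + j)`, where `g t = (-1)^t`, except `g 1 = -2`, sums to zero: since doubling is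
a bijection of `ℤ/n`, every row, column and matching sees each value of `g` exactly once.

For `n = 2m` the weights are `±1`. If `m` is even, `(-1)^j ε i` works on the cyclic square, with
`ε = +1` on the first `m` rows and `-1` on the others. If `m` is odd, no `±1` weighting of the
cyclic square works: its row, column and matching sums force the weights on the block of even
rows and even columns to sum to zero, but that block has an odd number `m²` of cells. Instead the
intercalate on rows and matchings `{0, m}` is switched, `ε` is `+1` on the first
`m + 1` rows, and the sign is flipped on the domino cells `(i, 2i)`, `(i, 2i + 1)` for `i < m`.
As `ε 0 = ε m`, the switch keeps the matching sums of `(-1)^j ε i` at zero. There is one domino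
cell per column, which restores the column sums; the two cells of a domino cancel in their row;
and every matching `k` with `1 ≤ k ≤ m` meets exactly two of them, in the
columns `2k - 1` and `2k` (mod `2m`), while the other matchings meet none.
-/

open Finset Function

section LatinSquare

variable {ι : Type*}

def IsLatinSquare (M : ι → ι → ι) : Prop :=
  (∀ k, Bijective (M k)) ∧ ∀ i j, ∃! k, M k i = j

theorem IsLatinSquare.of_comm {M : ι → ι → ι} (hM : ∀ k, Bijective (M k))
    (hcomm : ∀ k i, M k i = M i k) : IsLatinSquare M :=
  ⟨hM, fun i j => by simpa only [hcomm _ i] using (hM i).existsUnique j⟩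

structure IsNullOneFactorization [Fintype ι] (M : ι → ι → ι) (f : ι × ι → ℤ) : Prop where
  isLatinSquare : IsLatinSquare M
  sum_row : ∀ i, ∑ j, f (i, j) = 0
  sum_col : ∀ j, ∑ i, f (i, j) = 0
  sum_matching : ∀ k, ∑ i, f (i, M k i) = 0

end LatinSquare

section AddCommGroup

variable {G : Type*} [AddCommGroup G]

theorem isLatinSquare_add : IsLatinSquare fun k i : G => i + k :=
  .of_comm (fun k => (Equiv.addRight k).bijective) fun _ _ => add_comm _ _

theorem isNullOneFactorization_add_comp_add [Fintype G] {g : G → ℤ}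
    (hdouble : Bijective fun x : G => x + x) (hg : ∑ x, g x = 0) :
    IsNullOneFactorization (fun k i : G => i + k) fun p => g (p.1 + p.2) where
  isLatinSquare := isLatinSquare_add
  sum_row i := (Fintype.sum_equiv (Equiv.addLeft i) _ _ fun _ => rfl).trans hg
  sum_col j := (Fintype.sum_equiv (Equiv.addRight j) _ _ fun _ => rfl).trans hg
  sum_matching k :=
    (Fintype.sum_bijective _ ((Equiv.addRight k).bijective.comp hdouble) _ g
      fun i => by simp only [comp_apply, Equiv.coe_addRight, add_assoc]).trans hg

theorem isNullOneFactorization_add_mul [Fintype G] {χ ε : G → ℤ}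
    (hχ : ∀ x y, χ (x + y) = χ x * χ y) (hχsum : ∑ x, χ x = 0) (hεsum : ∑ x, ε x = 0)
    (hχε : ∑ x, χ x * ε x = 0) :
    IsNullOneFactorization (fun k i : G => i + k) fun p => χ p.2 * ε p.1 where
  isLatinSquare := isLatinSquare_add
  sum_row i := by simp only [← sum_mul, hχsum, zero_mul]
  sum_col j := by simp only [← mul_sum, hεsum, mul_zero]
  sum_matching k := calc
    ∑ i, χ (i + k) * ε i = (∑ i, χ i * ε i) * χ k := by
      rw [sum_mul]; exact sum_congr rfl fun i _ => by rw [hχ]; ring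
    _ = 0 := by rw [hχε, zero_mul]

variable [DecidableEq G]

def intercalateSwap (h k : G) : Equiv.Perm G :=
  if k = 0 ∨ k = h then Equiv.swap 0 h else 1

/-- The cyclic Latin square `i + k` with the intercalate on the rows and matchings `{0, h}`
switched (for `h + h = 0` these four cells form a `2 × 2` Latin subsquare). -/
def switchedAdd (h k i : G) : G :=
  intercalateSwap h k i + k

theorem intercalateSwap_involutive (h k : G) : Involutive (intercalateSwap h k) := by
  unfold intercalateSwap
  split_ifs
  · exact Equiv.swap_apply_self 0 h
  · exact fun _ => rfl

theorem apply_intercalateSwap {β : Type*} {w : G → β} {h : G} (hw : w 0 = w h) (k i : G) :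
    w (intercalateSwap h k i) = w i := by
  unfold intercalateSwap
  split_ifs
  · rw [Equiv.swap_apply_def]
    split_ifs with h0 hh
    · rw [h0, hw]
    · rw [hh, hw]
    · rfl
  · rfl

theorem switchedAdd_comm {h : G} (hh : h + h = 0) (k i : G) :
    switchedAdd h k i = switchedAdd h i k := by
  unfold switchedAdd intercalateSwap
  by_cases hk : k = 0 ∨ k = h <;> by_cases hi : i = 0 ∨ i = h
  · rcases hk with rfl | rfl <;> rcases hi with rfl | rfl <;> simp [hh]
  · simp only [hk, hi, if_true, if_false, Equiv.Perm.one_apply]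
    rw [Equiv.swap_apply_of_ne_of_ne (by tauto) (by tauto), add_comm]
  · simp only [hk, hi, if_true, if_false, Equiv.Perm.one_apply]
    rw [Equiv.swap_apply_of_ne_of_ne (by tauto) (by tauto), add_comm]
  · simp only [hk, hi, if_false, Equiv.Perm.one_apply, add_comm]

theorem isLatinSquare_switchedAdd {h : G} (hh : h + h = 0) : IsLatinSquare (switchedAdd h) :=
  .of_comm (fun k => (Equiv.addRight k).bijective.comp (intercalateSwap h k).bijective)
    (switchedAdd_comm hh)

theorem sum_switchedAdd [Fintype G] {M : Type*} [AddCommMonoid M] (F : G × G → M) (h k : G) :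
    ∑ i, F (i, switchedAdd h k i) = ∑ i, F (intercalateSwap h k i, i + k) := by
  rw [← Equiv.sum_comp (intercalateSwap h k)]
  simp only [switchedAdd, intercalateSwap_involutive h k _]

end AddCommGroup

theorem neg_one_pow_val_add {n : ℕ} (hn : Even n) (x y : Fin n) :
    (-1 : ℤ) ^ ((x + y : Fin n) : ℕ) = (-1) ^ (x : ℕ) * (-1) ^ (y : ℕ) := by
  rw [Fin.val_add, ← pow_add, neg_one_pow_eq_pow_mod_two, Nat.mod_mod_of_dvd _ hn.two_dvd,
    ← neg_one_pow_eq_pow_mod_two]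

theorem sum_neg_one_pow_val (n : ℕ) :
    ∑ x : Fin n, (-1 : ℤ) ^ (x : ℕ) = if Even n then 0 else 1 := by
  rw [Fin.sum_univ_eq_sum_range (fun t => (-1 : ℤ) ^ t), neg_one_geom_sum]

theorem bijective_add_self_of_odd {n : ℕ} [NeZero n] (hn : Odd n) :
    Bijective fun x : Fin n => x + x := by
  refine Finite.injective_iff_bijective.mp fun a b hab => Fin.ext ?_
  have hval := congrArg Fin.val hab
  simp only [Fin.val_add_eq_ite] at hval
  obtain ⟨c, rfl⟩ := hn
  have := a.isLt
  have := b.isLt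
  split_ifs at hval <;> omega

theorem sum_range_two_mul {M : Type*} [AddCommMonoid M] (f : ℕ → M) (m : ℕ) :
    ∑ t ∈ range (2 * m), f t = ∑ q ∈ range m, (f (2 * q) + f (2 * q + 1)) := by
  induction m with
  | zero => simp
  | succ m ih =>
    rw [show 2 * (m + 1) = 2 * m + 1 + 1 by ring, sum_range_succ, sum_range_succ, ih,
      sum_range_succ, add_assoc]

def stepSign (a t : ℕ) : ℤ :=
  if t < a then 1 else -1

theorem stepSign_eq_or (a t : ℕ) : stepSign a t = 1 ∨ stepSign a t = -1 := by
  unfold stepSign; split_ifs <;> simp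

theorem sum_range_stepSign {a n : ℕ} (h : a ≤ n) :
    ∑ t ∈ range n, stepSign a t = 2 * a - n := by
  obtain ⟨d, rfl⟩ := Nat.exists_eq_add_of_le h
  rw [sum_range_add, sum_congr rfl fun t ht => by rw [stepSign, if_pos (mem_range.mp ht)]]
  simp [stepSign]
  ring

theorem sum_range_neg_one_pow_mul_stepSign {a n : ℕ} (ha : Even a) (hn : Even n) (h : a ≤ n) :
    ∑ t ∈ range n, (-1 : ℤ) ^ t * stepSign a t = 0 := by
  obtain ⟨d, rfl⟩ := Nat.exists_eq_add_of_le h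
  have hd : Even d := (Nat.even_add.mp hn).mp ha
  rw [sum_range_add, sum_congr rfl fun t ht => by rw [stepSign, if_pos (mem_range.mp ht)]]
  simp [stepSign, pow_add, ha.neg_one_pow, neg_one_geom_sum, ha, hd]

theorem exists_isNullOneFactorization_of_odd {n : ℕ} (hn : Odd n) (h1 : 1 < n) :
    ∃ (M : Fin n → Fin n → Fin n) (f : Fin n × Fin n → ℤ), IsNullOneFactorization M f ∧
      ∀ p, f p = 1 ∨ f p = -1 ∨ f p = 2 ∨ f p = -2 := by
  have : NeZero n := ⟨by omega⟩
  let g : Fin n → ℤ := fun t => (-1) ^ (t : ℕ) - if (t : ℕ) = 1 then 1 else 0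
  have hg : ∑ t, g t = 0 := by
    rw [sum_sub_distrib, sum_neg_one_pow_val, if_neg (Nat.not_even_iff_odd.mpr hn),
      Fin.sum_univ_eq_sum_range (fun t => if t = 1 then (1 : ℤ) else 0), sum_ite_eq',
      if_pos (mem_range.mpr h1), sub_self]
  refine ⟨_, _, isNullOneFactorization_add_comp_add (bijective_add_self_of_odd hn) hg,
    fun p => ?_⟩
  simp only [g]
  split_ifs with h
  · rw [h]; norm_num
  · rcases neg_one_pow_eq_or ℤ ((p.1 + p.2 : Fin n) : ℕ) with h | h <;> simp [h]

theorem exists_isNullOneFactorization_two_mul_of_even {m : ℕ} [NeZero m] (hm : Even m) :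
    ∃ (M : Fin (2 * m) → Fin (2 * m) → Fin (2 * m)) (f : Fin (2 * m) × Fin (2 * m) → ℤ),
      IsNullOneFactorization M f ∧ ∀ p, f p = 1 ∨ f p = -1 := by
  refine ⟨_, _, isNullOneFactorization_add_mul (χ := fun x : Fin (2 * m) => (-1) ^ (x : ℕ))
    (ε := fun x => stepSign m x) (neg_one_pow_val_add (even_two_mul m))
    (by rw [sum_neg_one_pow_val, if_pos (even_two_mul m)]) ?_ ?_, fun p => ?_⟩
  · rw [Fin.sum_univ_eq_sum_range (stepSign m), sum_range_stepSign (by omega)]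
    push_cast; ring
  · rw [Fin.sum_univ_eq_sum_range (fun t => (-1) ^ t * stepSign m t)]
    exact sum_range_neg_one_pow_mul_stepSign hm (even_two_mul m) (by omega)
  · rcases neg_one_pow_eq_or ℤ (p.2 : ℕ) with h | h <;>
      rcases stepSign_eq_or m p.1 with h' | h' <;> simp [h, h']

theorem sum_neg_one_pow_mul_ite_pred_or_eq {m : ℕ} (k : Fin (2 * m)) :
    ∑ i : Fin (2 * m), (-1 : ℤ) ^ (i : ℕ) *
      (if 1 ≤ (k : ℕ) ∧ (k : ℕ) ≤ m ∧ ((i : ℕ) + 1 = k ∨ (i : ℕ) = k) then 2 else 0) = 0 := by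
  by_cases hk : 1 ≤ (k : ℕ) ∧ (k : ℕ) ≤ m
  · obtain ⟨c, hc⟩ : ∃ c, (k : ℕ) = c + 1 := ⟨k - 1, by omega⟩
    rw [Fin.sum_univ_eq_sum_range (fun t => (-1 : ℤ) ^ t *
      if 1 ≤ (k : ℕ) ∧ (k : ℕ) ≤ m ∧ (t + 1 = k ∨ t = k) then 2 else 0),
      sum_eq_add c (c + 1) (by omega)]
    · have hcm : c < m := by omega
      simp [hc, hcm, pow_succ]
    · intro t _ ht
      rw [if_neg (by omega), mul_zero]
    all_goals intro h; simp only [mem_range] at h; omega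
  · exact sum_eq_zero fun i _ => by rw [if_neg (by tauto), mul_zero]

section Domino

variable {m : ℕ} [NeZero m]

def antipode (m : ℕ) [NeZero m] : Fin (2 * m) :=
  ⟨m, by have := NeZero.pos m; omega⟩

theorem antipode_add_self : antipode m + antipode m = 0 :=
  Fin.ext <| by simp [Fin.val_add, antipode, ← two_mul]

theorem val_intercalateSwap_antipode (k i : Fin (2 * m)) :
    (intercalateSwap (antipode m) k i : ℕ) =
      if (k : ℕ) = 0 ∨ (k : ℕ) = m then
        (if (i : ℕ) = 0 then m else if (i : ℕ) = m then 0 else i) else i := by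
  have e0 : ∀ x : Fin (2 * m), x = 0 ↔ (x : ℕ) = 0 := fun x => by rw [Fin.ext_iff, Fin.val_zero]
  have eh : ∀ x : Fin (2 * m), x = antipode m ↔ (x : ℕ) = m := fun x => Fin.ext_iff
  unfold intercalateSwap
  simp only [e0, eh]
  split_ifs <;> simp only [Equiv.swap_apply_def, Equiv.Perm.one_apply, e0, eh] <;>
    split_ifs <;> simp_all [antipode]

/-- The cell `(i, i + k)` of the cyclic square, moved to row `intercalateSwap (antipode m) k i`
by the switch, is a domino cell exactly for `i ∈ {k - 1, k}`, `1 ≤ k ≤ m`. -/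
theorem div_two_val_add_eq_intercalateSwap_iff (hm : 1 < m) (k i : Fin (2 * m)) :
    ((i + k : Fin (2 * m)) : ℕ) / 2 = intercalateSwap (antipode m) k i ↔
      1 ≤ (k : ℕ) ∧ (k : ℕ) ≤ m ∧ ((i : ℕ) + 1 = k ∨ (i : ℕ) = k) := by
  have := i.isLt
  have := k.isLt
  rw [val_intercalateSwap_antipode, Fin.val_add_eq_ite]
  split_ifs <;> omega

def dominoWeight (m : ℕ) [NeZero m] (p : Fin (2 * m) × Fin (2 * m)) : ℤ :=
  (-1) ^ (p.2 : ℕ) * (stepSign (m + 1) p.1 - if (p.2 : ℕ) / 2 = p.1 then 2 else 0)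

theorem dominoWeight_eq_or (p : Fin (2 * m) × Fin (2 * m)) :
    dominoWeight m p = 1 ∨ dominoWeight m p = -1 := by
  have hsign := neg_one_pow_eq_or ℤ (p.2 : ℕ)
  unfold dominoWeight
  split_ifs with hd
  · have hε : stepSign (m + 1) p.1 = 1 := if_pos (by have := p.2.isLt; omega)
    rcases hsign with h | h <;> simp [h, hε]
  · rcases hsign with h | h <;> rcases stepSign_eq_or (m + 1) p.1 with h' | h' <;> simp [h, h']

theorem sum_dominoWeight_row (i : Fin (2 * m)) : ∑ j, dominoWeight m (i, j) = 0 := by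
  simp only [dominoWeight, mul_sub, sum_sub_distrib, ← sum_mul, sum_neg_one_pow_val,
    if_pos (even_two_mul m), zero_mul, zero_sub, neg_eq_zero]
  rw [Fin.sum_univ_eq_sum_range (fun t => (-1) ^ t * if t / 2 = (i : ℕ) then (2 : ℤ) else 0),
    sum_range_two_mul]
  refine sum_eq_zero fun q _ => ?_
  have h0 : 2 * q / 2 = q := by omega
  have h1 : (2 * q + 1) / 2 = q := by omega
  simp only [h0, h1, pow_succ, pow_mul]
  split_ifs <;> norm_num

theorem sum_dominoWeight_col (j : Fin (2 * m)) : ∑ i, dominoWeight m (i, j) = 0 := by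
  have := j.isLt
  simp only [dominoWeight]
  rw [← mul_sum, sum_sub_distrib,
    Fin.sum_univ_eq_sum_range (stepSign (m + 1)), sum_range_stepSign (by omega),
    Fin.sum_univ_eq_sum_range (fun t => if (j : ℕ) / 2 = t then (2 : ℤ) else 0), sum_ite_eq,
    if_pos (mem_range.mpr (by omega))]
  push_cast; ring

theorem sum_dominoWeight_matching (hm : Odd m) (hm1 : 1 < m) (k : Fin (2 * m)) :
    ∑ i, dominoWeight m (i, switchedAdd (antipode m) k i) = 0 := by
  have hε : ∀ i, stepSign (m + 1) (intercalateSwap (antipode m) k i) = stepSign (m + 1) i :=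
    apply_intercalateSwap (w := fun x : Fin (2 * m) => stepSign (m + 1) x)
      (by simp [stepSign, antipode]) k
  have hprod : ∑ i : Fin (2 * m), (-1 : ℤ) ^ (i : ℕ) * stepSign (m + 1) i = 0 := by
    rw [Fin.sum_univ_eq_sum_range (fun t => (-1 : ℤ) ^ t * stepSign (m + 1) t)]
    exact sum_range_neg_one_pow_mul_stepSign hm.add_one (even_two_mul m) (by omega)
  rw [sum_switchedAdd]
  simp only [dominoWeight, hε, div_two_val_add_eq_intercalateSwap_iff hm1,
    neg_one_pow_val_add (even_two_mul m)]
  calc _ = (-1 : ℤ) ^ (k : ℕ) * (∑ i : Fin (2 * m), (-1 : ℤ) ^ (i : ℕ) * stepSign (m + 1) i -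
        ∑ i : Fin (2 * m), (-1 : ℤ) ^ (i : ℕ) *
          (if 1 ≤ (k : ℕ) ∧ (k : ℕ) ≤ m ∧ ((i : ℕ) + 1 = k ∨ (i : ℕ) = k) then 2 else 0)) := by
        rw [← sum_sub_distrib, mul_sum]
        exact sum_congr rfl fun i _ => by ring
    _ = 0 := by rw [hprod, sum_neg_one_pow_mul_ite_pred_or_eq, sub_zero, mul_zero]

theorem exists_isNullOneFactorization_two_mul_of_odd (hm : Odd m) (hm1 : 1 < m) :
    ∃ (M : Fin (2 * m) → Fin (2 * m) → Fin (2 * m)) (f : Fin (2 * m) × Fin (2 * m) → ℤ),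
      IsNullOneFactorization M f ∧ ∀ p, f p = 1 ∨ f p = -1 :=
  ⟨switchedAdd (antipode m), dominoWeight m,
    ⟨isLatinSquare_switchedAdd antipode_add_self, sum_dominoWeight_row, sum_dominoWeight_col,
      sum_dominoWeight_matching hm hm1⟩, dominoWeight_eq_or⟩

end Domino

theorem exists_isNullOneFactorization_of_even {n : ℕ} (hn : Even n) (h2 : 2 < n) :
    ∃ (M : Fin n → Fin n → Fin n) (f : Fin n × Fin n → ℤ),
      IsNullOneFactorization M f ∧ ∀ p, f p = 1 ∨ f p = -1 := by
  obtain ⟨m, rfl⟩ := hn.two_dvd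
  have : NeZero m := ⟨by omega⟩
  rcases Nat.even_or_odd m with hm | hm
  · exact exists_isNullOneFactorization_two_mul_of_even hm
  · exact exists_isNullOneFactorization_two_mul_of_odd hm (by omega)

/-- for n ≥ 3, K_{n,n} has a 3-null 1-factorization (a 1-factorization and
a zero-sum 3-flow with each 1-factor of weight zero); for even n ≠ 6 one may use only ±1.
The matchings are encoded by M : each M k is a bijection Fin n → Fin n, and each edge
(i,j) lies in exactly one matching. -/
theorem knn_null_one_factorization (n : ℕ) (hn : 3 ≤ n) :
    (∃ (M : Fin n → Fin n → Fin n) (f : Fin n × Fin n → ℤ),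
      (∀ k, Function.Bijective (M k)) ∧
      (∀ i j, ∃! k, M k i = j) ∧
      (∀ p, f p = 1 ∨ f p = -1 ∨ f p = 2 ∨ f p = -2) ∧
      (∀ i, ∑ j, f (i, j) = 0) ∧
      (∀ j, ∑ i, f (i, j) = 0) ∧
      (∀ k, ∑ i, f (i, M k i) = 0)) ∧
    (Even n → n ≠ 6 →
      ∃ (M : Fin n → Fin n → Fin n) (f : Fin n × Fin n → ℤ),
      (∀ k, Function.Bijective (M k)) ∧
      (∀ i j, ∃! k, M k i = j) ∧
      (∀ p, f p = 1 ∨ f p = -1) ∧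
      (∀ i, ∑ j, f (i, j) = 0) ∧
      (∀ j, ∑ i, f (i, j) = 0) ∧
      (∀ k, ∑ i, f (i, M k i) = 0)) := by
  have hwide : ∃ (M : Fin n → Fin n → Fin n) (f : Fin n × Fin n → ℤ),
      IsNullOneFactorization M f ∧ ∀ p, f p = 1 ∨ f p = -1 ∨ f p = 2 ∨ f p = -2 := by
    rcases Nat.even_or_odd n with he | ho
    · obtain ⟨M, f, hMf, hf⟩ := exists_isNullOneFactorization_of_even he (by omega)
      exact ⟨M, f, hMf, fun p => (hf p).imp_right Or.inl⟩
    · exact exists_isNullOneFactorization_of_odd ho (by omega)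
  obtain ⟨M, f, ⟨⟨hbij, huniq⟩, hrow, hcol, hmat⟩, hf⟩ := hwide
  refine ⟨⟨M, f, hbij, huniq, hf, hrow, hcol, hmat⟩, fun he _ => ?_⟩
  obtain ⟨M, f, ⟨⟨hbij, huniq⟩, hrow, hcol, hmat⟩, hf⟩ :=
    exists_isNullOneFactorization_of_even he (by omega)
  exact ⟨M, f, hbij, huniq, hf, hrow, hcol, hmat⟩
end

section
/- For every odd v ≥ 1, the edge set of the complete graph K_{v+7} can be partitioned into v+7 triangles and v perfect matchings; in particular, each vertex lies in exactly three of the triangles. -/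
/-!
Write `v + 7 = 2h` and take the vertices to be `Bool × ZMod h`. The `2h` triangles
`{(b, t), (!b, t + 1), (!b, t + 2)}` use up the edges of difference `±1` inside each side and
of difference `±1, ±2` across. The remaining edges are cut into `2h - 7 = v` perfect matchings:
the `h` rotations of one "starter" matching, which contains one edge of every remaining
difference inside a side (for even `h` except `h / 2`) and of a few differences across, the
translation by `h / 2` for even `h`, and one matching `(b, t) ↦ (!b, t ± c)` for every remaining
difference `c` across.
Once every edge is known to be covered at least once, double counting
(`6 (v + 7) + v (v + 7) = (v + 7) (v + 6)`) shows that every edge is covered exactly once and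
every vertex lies in exactly three triangles. The starters need `h ≥ 7` (`h` odd) or `h ≥ 12`
(`h` even); the remaining values `v = 1, 3, 5, 9, 13` are explicit decompositions.
-/

open Finset Function

def CoversEdge {V ι κ : Type*} (T : ι → Finset V) (M : κ → V → V) (x y : V) : Prop :=
  (∃ i, x ∈ T i ∧ y ∈ T i) ∨ ∃ k, M k x = y

lemma CoversEdge.symm {V ι κ : Type*} {T : ι → Finset V} {M : κ → V → V}
    (hM : ∀ k, Involutive (M k)) {x y : V} (h : CoversEdge T M x y) : CoversEdge T M y x := by
  rcases h with ⟨i, hx, hy⟩ | ⟨k, hk⟩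
  · exact .inl ⟨i, hy, hx⟩
  · exact .inr ⟨k, by rw [← hk, hM]⟩

structure TriangleMatchingCover (V ι κ : Type*) where
  tri : ι → Finset V
  mat : κ → V → V
  card_tri : ∀ i, #(tri i) = 3
  mat_ne : ∀ k x, mat k x ≠ x
  mat_involutive : ∀ k, Involutive (mat k)
  covers : ∀ x y, x ≠ y → CoversEdge tri mat x y

namespace TriangleMatchingCover

variable {V ι κ : Type*}

def congr {V' ι' κ' : Type*} (C : TriangleMatchingCover V ι κ) (eV : V ≃ V')
    (eι : ι ≃ ι') (eκ : κ ≃ κ') : TriangleMatchingCover V' ι' κ' where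
  tri i := (C.tri (eι.symm i)).map eV.toEmbedding
  mat k x := eV (C.mat (eκ.symm k) (eV.symm x))
  card_tri i := by simp [C.card_tri]
  mat_ne k x h := C.mat_ne (eκ.symm k) (eV.symm x) (eV.eq_symm_apply.2 h)
  mat_involutive k x := by simp [C.mat_involutive _ _]
  covers x y hxy := by
    rcases C.covers (eV.symm x) (eV.symm y) (by simpa using hxy) with ⟨i, hx, hy⟩ | ⟨k, hk⟩
    · exact .inl ⟨eι i, by simpa [mem_map_equiv] using ⟨hx, hy⟩⟩
    · exact .inr ⟨eκ k, by simp [hk]⟩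

lemma nonempty_fin [Fintype V] [Fintype ι] [Fintype κ] (C : TriangleMatchingCover V ι κ)
    {n m : ℕ} (hV : Fintype.card V = n) (hι : Fintype.card ι = n) (hκ : Fintype.card κ = m) :
    Nonempty (TriangleMatchingCover (Fin n) (Fin n) (Fin m)) :=
  ⟨C.congr (Fintype.equivFinOfCardEq hV) (Fintype.equivFinOfCardEq hι)
    (Fintype.equivFinOfCardEq hκ)⟩

section Counting

variable [DecidableEq V] (C : TriangleMatchingCover V ι κ)

lemma one_le_card_tri_pair_add_card_mat [Fintype ι] [Fintype κ] {x y : V} (hxy : x ≠ y) :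
    1 ≤ #{i | x ∈ C.tri i ∧ y ∈ C.tri i} + #{k | C.mat k x = y} := by
  rcases C.covers x y hxy with ⟨i, hi⟩ | ⟨k, hk⟩
  · have : 0 < #{i | x ∈ C.tri i ∧ y ∈ C.tri i} := card_pos.2 ⟨i, by simpa using hi⟩
    omega
  · have : 0 < #{k | C.mat k x = y} := card_pos.2 ⟨k, by simpa using hk⟩
    omega

lemma sum_card_tri_mem [Fintype V] [Fintype ι] :
    ∑ x, #{i | x ∈ C.tri i} = 3 * Fintype.card ι := by
  simp only [card_filter]
  rw [sum_comm]
  simp [C.card_tri, mul_comm]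

lemma sum_card_tri_pair [Fintype V] [Fintype ι] (x : V) :
    ∑ y ∈ univ.erase x, #{i | x ∈ C.tri i ∧ y ∈ C.tri i} = 2 * #{i | x ∈ C.tri i} := by
  simp only [card_filter]
  rw [sum_comm, mul_sum]
  refine sum_congr rfl fun i _ => ?_
  by_cases hx : x ∈ C.tri i
  · simp [hx, card_erase_of_mem, C.card_tri]
  · simp [hx]

lemma sum_card_mat [Fintype V] [Fintype κ] (x : V) :
    ∑ y ∈ univ.erase x, #{k | C.mat k x = y} = Fintype.card κ := by
  simp only [card_filter]
  rw [sum_comm]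
  simp [eq_comm, fun k => (C.mat_ne k x).symm]

variable [Fintype V] [Fintype ι] [Fintype κ]

/-- The `card V - 1` edges at `x` are covered `2 * deg x + card κ` times in total, so
`deg x ≥ 3`; the degrees add up to `3 * card ι = 3 * card V`, so all of them equal `3`. -/
theorem card_tri_mem_eq_three (hι : Fintype.card ι = Fintype.card V)
    (hκ : Fintype.card κ + 7 = Fintype.card V) (x : V) : #{i | x ∈ C.tri i} = 3 := by
  have three_le (x : V) : 3 ≤ #{i | x ∈ C.tri i} := by
    have := card_nsmul_le_sum (univ.erase x) _ 1 fun y hy =>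
      C.one_le_card_tri_pair_add_card_mat (ne_of_mem_erase hy).symm
    rw [sum_add_distrib, sum_card_tri_pair, sum_card_mat, card_erase_of_mem (mem_univ x),
      card_univ, smul_eq_mul] at this
    omega
  have hsum : ∑ _x : V, 3 = ∑ x, #{i | x ∈ C.tri i} := by
    rw [sum_card_tri_mem, hι, sum_const, card_univ, smul_eq_mul, mul_comm]
  exact ((sum_eq_sum_iff_of_le fun x _ => three_le x).1 hsum x (mem_univ x)).symm

theorem card_tri_pair_add_card_mat_eq_one (hι : Fintype.card ι = Fintype.card V)
    (hκ : Fintype.card κ + 7 = Fintype.card V) {x y : V} (hxy : x ≠ y) :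
    #{i | x ∈ C.tri i ∧ y ∈ C.tri i} + #{k | C.mat k x = y} = 1 := by
  have hsum : ∑ _y ∈ univ.erase x, 1 =
      ∑ y ∈ univ.erase x, (#{i | x ∈ C.tri i ∧ y ∈ C.tri i} + #{k | C.mat k x = y}) := by
    rw [sum_add_distrib, sum_card_tri_pair, sum_card_mat, C.card_tri_mem_eq_three hι hκ,
      sum_const, card_erase_of_mem (mem_univ x), card_univ, smul_eq_mul, mul_one]
    omega
  exact ((sum_eq_sum_iff_of_le fun y hy => C.one_le_card_tri_pair_add_card_mat
    (ne_of_mem_erase hy).symm).1 hsum y (mem_erase.2 ⟨hxy.symm, mem_univ y⟩)).symm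

end Counting

end TriangleMatchingCover

section Cyclic

variable {R : Type*} [AddCommGroup R]

def shift (c : R) (x : Bool × R) : Bool × R := (x.1, x.2 + c)

def rotate (p : Bool × R → Bool × R) (j : R) (x : Bool × R) : Bool × R :=
  shift j (p (shift (-j) x))

def Realizes (p : Bool × R → Bool × R) (b b' : Bool) (d : R) : Prop :=
  ∃ u, p (b, u) = (b', u + d)

def crossMatching (c : R) (x : Bool × R) : Bool × R :=
  if x.1 then (false, x.2 - c) else (true, x.2 + c)

lemma shift_ne {c : R} (hc : c ≠ 0) (x : Bool × R) : shift c x ≠ x := by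
  simp [shift, Prod.ext_iff, hc]

lemma shift_involutive {c : R} (hc : c + c = 0) : Involutive (shift c) := by
  intro x
  simp [shift, add_assoc, hc]

lemma shift_shift (c t : R) (x : Bool × R) : shift c (shift t x) = shift t (shift c x) := by
  simp [shift, add_right_comm]

lemma rotate_ne {p : Bool × R → Bool × R} (hp : ∀ x, p x ≠ x) (j : R) (x : Bool × R) :
    rotate p j x ≠ x := by
  intro h
  apply hp (shift (-j) x)
  simpa [rotate, shift] using congrArg (shift (-j)) h

lemma rotate_involutive {p : Bool × R → Bool × R} (hp : Involutive p) (j : R) :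
    Involutive (rotate p j) := by
  intro x
  simp [rotate, shift, hp _]

lemma Realizes.exists_rotate {p : Bool × R → Bool × R} {b b' : Bool} {d : R}
    (h : Realizes p b b' d) (t : R) : ∃ j, rotate p j (b, t) = (b', t + d) := by
  obtain ⟨u, hu⟩ := h
  refine ⟨t - u, ?_⟩
  simp only [rotate, shift, neg_sub, add_sub_cancel, hu, Prod.mk.injEq, true_and]
  abel

lemma Realizes.apply_eq {p : Bool × R → Bool × R} (hp : ∀ c x, p (shift c x) = shift c (p x))
    {b b' : Bool} {d : R} (h : Realizes p b b' d) (t : R) : p (b, t) = (b', t + d) := by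
  obtain ⟨u, hu⟩ := h
  have := hp (t - u) (b, u)
  simp only [shift, add_sub_cancel, hu] at this
  rw [this, Prod.mk.injEq]
  exact ⟨rfl, by abel⟩

lemma crossMatching_ne (c : R) (x : Bool × R) : crossMatching c x ≠ x := by
  obtain ⟨_ | _, t⟩ := x <;> simp [crossMatching]

lemma crossMatching_involutive (c : R) : Involutive (crossMatching c) := by
  rintro ⟨_ | _, t⟩ <;> simp [crossMatching]

lemma crossMatching_shift (c t : R) (x : Bool × R) :
    crossMatching c (shift t x) = shift t (crossMatching c x) := by
  obtain ⟨_ | _, u⟩ := x <;> simp [crossMatching, shift] <;> abel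

lemma realizes_crossMatching (c : R) : Realizes (crossMatching c) false true c :=
  ⟨0, by simp [crossMatching]⟩

end Cyclic

section Triangles

variable {R : Type*} [CommRing R] [DecidableEq R]

def cyclicTriangle (x : Bool × R) : Finset (Bool × R) :=
  {x, (!x.1, x.2 + 1), (!x.1, x.2 + 2)}

lemma card_cyclicTriangle [Nontrivial R] (x : Bool × R) : #(cyclicTriangle x) = 3 := by
  have : (1 : R) ≠ 2 := by
    intro h
    have := congrArg (· - 1) h
    norm_num at this
  rw [cyclicTriangle, card_insert_of_notMem, card_pair] <;> simp [Prod.ext_iff, this]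

lemma exists_cyclicTriangle_same (b : Bool) (t : R) {d : R} (hd : d = 1 ∨ d = -1) :
    ∃ i, (b, t) ∈ cyclicTriangle i ∧ (b, t + d) ∈ cyclicTriangle i := by
  rcases hd with rfl | rfl
  · exact ⟨(!b, t - 1), by simp [cyclicTriangle]; grind⟩
  · exact ⟨(!b, t - 2), by simp [cyclicTriangle]; grind⟩

lemma exists_cyclicTriangle_cross (b : Bool) (t : R) {d : R}
    (hd : d = 1 ∨ d = 2 ∨ d = -1 ∨ d = -2) :
    ∃ i, (b, t) ∈ cyclicTriangle i ∧ (!b, t + d) ∈ cyclicTriangle i := by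
  rcases hd with rfl | rfl | rfl | rfl
  · exact ⟨(b, t), by simp [cyclicTriangle]⟩
  · exact ⟨(b, t), by simp [cyclicTriangle]⟩
  · exact ⟨(!b, t - 1), by simp [cyclicTriangle]; grind⟩
  · exact ⟨(!b, t - 2), by simp [cyclicTriangle]; grind⟩

end Triangles

section Representatives

variable {h : ℕ}

lemma natCast_eq_neg_of_add_eq {n k : ℕ} (hnk : n + k = h) : (n : ZMod h) = -k := by
  rw [eq_neg_iff_add_eq_zero, ← Nat.cast_add, hnk, ZMod.natCast_self]

/-- The starters are written on the representatives `0 ≤ n < h`, so that checking them is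
linear arithmetic over `ℕ`. -/
def liftNat (f : Bool × ℕ → Bool × ℕ) (x : Bool × ZMod h) : Bool × ZMod h :=
  ((f (x.1, x.2.val)).1, (f (x.1, x.2.val)).2)

def IsFreeInvolutionBelow (h : ℕ) (f : Bool × ℕ → Bool × ℕ) : Prop :=
  ∀ x : Bool × ℕ, x.2 < h → (f x).2 < h ∧ f (f x) = x ∧ f x ≠ x

variable {f : Bool × ℕ → Bool × ℕ}

lemma IsFreeInvolutionBelow.liftNat_involutive [NeZero h] (hf : IsFreeInvolutionBelow h f) :
    Involutive (liftNat (h := h) f) := by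
  rintro ⟨b, t⟩
  obtain ⟨hlt, hff, -⟩ := hf (b, t.val) t.val_lt
  simp [liftNat, ZMod.val_cast_of_lt hlt, hff]

lemma IsFreeInvolutionBelow.liftNat_ne [NeZero h] (hf : IsFreeInvolutionBelow h f)
    (x : Bool × ZMod h) : liftNat f x ≠ x := by
  obtain ⟨b, t⟩ := x
  obtain ⟨hlt, -, hne⟩ := hf (b, t.val) t.val_lt
  intro heq
  simp only [liftNat, Prod.mk.injEq] at heq
  have := congrArg ZMod.val heq.2
  rw [ZMod.val_cast_of_lt hlt] at this
  exact hne (Prod.ext heq.1 this)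

lemma realizes_liftNat {b b' : Bool} {n : ℕ}
    (hf : ∃ m < h, (f (b, m)).1 = b' ∧ ((f (b, m)).2 = m + n ∨ (f (b, m)).2 + h = m + n)) :
    Realizes (liftNat f) b b' (n : ZMod h) := by
  obtain ⟨m, hm, h1, h2⟩ := hf
  refine ⟨m, ?_⟩
  simp only [liftNat, ZMod.val_cast_of_lt hm, h1, Prod.mk.injEq, true_and]
  rcases h2 with h2 | h2
  · rw [h2, Nat.cast_add]
  · simpa using congrArg (Nat.cast : ℕ → ZMod h) h2

end Representatives

/-- The matchings are the `h` rotations of `starter` together with the shift-invariant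
matchings `extra k`. The `realizes` fields ask that `starter` or some `extra k` contain an edge
of every difference (inside a side, or from side `false` to side `true`) that the cyclic
triangles do not cover. -/
structure CyclicScheme (h : ℕ) (κ : Type*) where
  starter : Bool × ZMod h → Bool × ZMod h
  extra : κ → Bool × ZMod h → Bool × ZMod h
  starter_ne : ∀ x, starter x ≠ x
  starter_involutive : Involutive starter
  extra_ne : ∀ k x, extra k x ≠ x
  extra_involutive : ∀ k, Involutive (extra k)
  extra_shift : ∀ k c x, extra k (shift c x) = shift c (extra k x)
  realizes_same : ∀ b n, 2 ≤ n → n + 2 ≤ h →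
    Realizes starter b b (n : ZMod h) ∨ ∃ k, Realizes (extra k) b b (n : ZMod h)
  realizes_cross : ∀ n < h, n ≠ 1 → n ≠ 2 → n + 1 ≠ h → n + 2 ≠ h →
    Realizes starter false true (n : ZMod h) ∨ ∃ k, Realizes (extra k) false true (n : ZMod h)

namespace CyclicScheme

variable {h : ℕ} {κ : Type*} (S : CyclicScheme h κ)

def mat : ZMod h ⊕ κ → Bool × ZMod h → Bool × ZMod h :=
  Sum.elim (rotate S.starter) S.extra

lemma mat_ne : ∀ k x, S.mat k x ≠ x
  | .inl j => rotate_ne S.starter_ne j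
  | .inr k => S.extra_ne k

lemma mat_involutive : ∀ k, Involutive (S.mat k)
  | .inl j => rotate_involutive S.starter_involutive j
  | .inr k => S.extra_involutive k

lemma coversEdge_of_realizes {b b' : Bool} {d : ZMod h}
    (hd : Realizes S.starter b b' d ∨ ∃ k, Realizes (S.extra k) b b' d) (t : ZMod h) :
    CoversEdge cyclicTriangle S.mat (b, t) (b', t + d) := by
  right
  rcases hd with hd | ⟨k, hk⟩
  · obtain ⟨j, hj⟩ := hd.exists_rotate t
    exact ⟨.inl j, hj⟩
  · exact ⟨.inr k, hk.apply_eq (S.extra_shift k) t⟩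

variable [NeZero h]

lemma coversEdge_same (b : Bool) (t : ZMod h) {d : ZMod h} (hd : d ≠ 0) :
    CoversEdge cyclicTriangle S.mat (b, t) (b, t + d) := by
  obtain ⟨n, hn, rfl⟩ : ∃ n < h, (n : ZMod h) = d := ⟨d.val, d.val_lt, d.natCast_zmod_val⟩
  by_cases htri : n = 1 ∨ n + 1 = h
  · refine .inl (exists_cyclicTriangle_same b t ?_)
    rcases htri with rfl | hn1
    · simp
    · simp [natCast_eq_neg_of_add_eq hn1]
  · have : n ≠ 0 := by rintro rfl; simp at hd
    exact S.coversEdge_of_realizes (S.realizes_same b n (by omega) (by omega)) t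

lemma coversEdge_cross (t d : ZMod h) :
    CoversEdge cyclicTriangle S.mat (false, t) (true, t + d) := by
  obtain ⟨n, hn, rfl⟩ : ∃ n < h, (n : ZMod h) = d := ⟨d.val, d.val_lt, d.natCast_zmod_val⟩
  by_cases htri : n = 1 ∨ n = 2 ∨ n + 1 = h ∨ n + 2 = h
  · refine .inl (exists_cyclicTriangle_cross false t ?_)
    rcases htri with rfl | rfl | hn1 | hn2
    · simp
    · simp
    · simp [natCast_eq_neg_of_add_eq hn1]
    · simp [natCast_eq_neg_of_add_eq hn2]
  · obtain ⟨h1, h2, h3, h4⟩ : n ≠ 1 ∧ n ≠ 2 ∧ n + 1 ≠ h ∧ n + 2 ≠ h := by tauto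
    exact S.coversEdge_of_realizes (S.realizes_cross n hn h1 h2 h3 h4) t

lemma coversEdge {x y : Bool × ZMod h} (hxy : x ≠ y) : CoversEdge cyclicTriangle S.mat x y := by
  obtain ⟨b, t⟩ := x
  obtain ⟨b', t'⟩ := y
  have ht' : t' = t + (t' - t) := by abel
  cases b <;> cases b'
  · exact ht' ▸ S.coversEdge_same false t (sub_ne_zero.2 fun h => hxy (by rw [h]))
  · exact ht' ▸ S.coversEdge_cross t _
  · have ht : t = t' + (t - t') := by abel
    exact ht ▸ (S.coversEdge_cross t' _).symm S.mat_involutive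
  · exact ht' ▸ S.coversEdge_same true t (sub_ne_zero.2 fun h => hxy (by rw [h]))

def toCover (hh : 1 < h) :
    TriangleMatchingCover (Bool × ZMod h) (Bool × ZMod h) (ZMod h ⊕ κ) where
  tri := cyclicTriangle
  mat := S.mat
  card_tri :=
    have : Fact (1 < h) := ⟨hh⟩
    card_cyclicTriangle
  mat_ne := S.mat_ne
  mat_involutive := S.mat_involutive
  covers _ _ := S.coversEdge

end CyclicScheme

section Odd

/-- `h = 2s + 1`: on each side `n` is paired with `-n`, except for `0` and the pair `{s, s + 1}`
of difference `±1`, whose points are matched across the sides with differences `s`, `s + 1`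
and `0`. -/
def oddStarter (s : ℕ) (x : Bool × ℕ) : Bool × ℕ :=
  if x.2 = 0 then (!x.1, s)
  else if x.2 = s then (!x.1, 0)
  else if x.2 = s + 1 then (!x.1, s + 1)
  else (x.1, 2 * s + 1 - x.2)

variable {s : ℕ}

lemma isFreeInvolutionBelow_oddStarter (hs : 1 ≤ s) :
    IsFreeInvolutionBelow (2 * s + 1) (oddStarter s) := by
  rintro ⟨b, n⟩ hn
  obtain ⟨y, hy⟩ : ∃ y, oddStarter s (b, n) = y := ⟨_, rfl⟩
  rw [hy]
  simp only [oddStarter] at hy hn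
  split_ifs at hy <;> subst hy <;> simp only [oddStarter] <;> split_ifs <;> simp at * <;> omega

lemma oddStarter_realizes_same (b : Bool) {n : ℕ} (hn : 2 ≤ n) (hn' : n + 2 ≤ 2 * s + 1) :
    Realizes (liftNat (h := 2 * s + 1) (oddStarter s)) b b n := by
  apply realizes_liftNat
  rcases Nat.even_or_odd' n with ⟨k, rfl | rfl⟩
  · refine ⟨2 * s + 1 - k, by omega, ?_⟩
    simp only [oddStarter]; split_ifs <;> simp at * <;> omega
  · refine ⟨s - k, by omega, ?_⟩
    simp only [oddStarter]; split_ifs <;> simp at * <;> omega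

lemma oddStarter_realizes_cross (hs : 1 ≤ s) {n : ℕ} (hn : n = 0 ∨ n = s ∨ n = s + 1) :
    Realizes (liftNat (h := 2 * s + 1) (oddStarter s)) false true n := by
  apply realizes_liftNat
  rcases hn with rfl | rfl | rfl
  · exact ⟨s + 1, by omega, by simp [oddStarter]⟩
  · exact ⟨0, by omega, by simp [oddStarter]⟩
  · refine ⟨s, by omega, ?_⟩
    simp only [oddStarter]; split_ifs <;> simp at * <;> omega

def oddCrossings (s : ℕ) : Finset ℕ :=
  range (2 * s + 1) \ {0, 1, 2, s, s + 1, 2 * s - 1, 2 * s}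

lemma card_oddCrossings (hs : 3 ≤ s) : #(oddCrossings s) = 2 * s - 6 := by
  have : #({0, 1, 2, s, s + 1, 2 * s - 1, 2 * s} : Finset ℕ) = 7 := by
    repeat rw [card_insert_of_notMem (by simp; omega)]
    rfl
  rw [oddCrossings, card_sdiff_of_subset (by intro n; simp; omega), this, card_range]
  omega

def oddScheme (hs : 3 ≤ s) : CyclicScheme (2 * s + 1) (oddCrossings s) where
  starter := liftNat (oddStarter s)
  extra c := crossMatching (c : ℕ)
  starter_ne := (isFreeInvolutionBelow_oddStarter (by omega)).liftNat_ne
  starter_involutive := (isFreeInvolutionBelow_oddStarter (by omega)).liftNat_involutive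
  extra_ne _ := crossMatching_ne _
  extra_involutive _ := crossMatching_involutive _
  extra_shift _ := crossMatching_shift _
  realizes_same b _ hn hn' := .inl (oddStarter_realizes_same b hn hn')
  realizes_cross n hn _ _ _ _ := by
    by_cases hst : n = 0 ∨ n = s ∨ n = s + 1
    · exact .inl (oddStarter_realizes_cross (by omega) hst)
    · exact .inr ⟨⟨n, by simp [oddCrossings]; omega⟩, realizes_crossMatching _⟩

end Odd

section Even

/-- `h = 2s`, `g = ⌊(s + 1) / 2⌋`: on each side `n` is paired with `-n` for `n` near `0` (even
differences `2, 4, …`) and with `1 - n` in between (odd differences), except for `0, g, s, s + 1`,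
which are matched across the sides with differences `s`, `s + 1 - g`, `s + g` and `s - 1`. -/
def evenStarter (s : ℕ) (x : Bool × ℕ) : Bool × ℕ :=
  if x.2 = 0 then (!x.1, if x.1 then s + 1 else s)
  else if x.2 = (s + 1) / 2 then (!x.1, if x.1 then s else s + 1)
  else if x.2 = s then (!x.1, if x.1 then 0 else (s + 1) / 2)
  else if x.2 = s + 1 then (!x.1, if x.1 then (s + 1) / 2 else 0)
  else if x.2 < (s + 1) / 2 ∨ 2 * s - (s + 1) / 2 < x.2 then (x.1, 2 * s - x.2)
  else (x.1, 2 * s + 1 - x.2)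

variable {s : ℕ}

lemma isFreeInvolutionBelow_evenStarter (hs : 6 ≤ s) :
    IsFreeInvolutionBelow (2 * s) (evenStarter s) := by
  rintro ⟨b, n⟩ hn
  obtain ⟨y, hy⟩ : ∃ y, evenStarter s (b, n) = y := ⟨_, rfl⟩
  rw [hy]
  simp only [evenStarter] at hy hn
  cases b <;> simp only [Bool.not_false, Bool.not_true, Bool.false_eq_true, if_true, if_false]
    at hy <;> split_ifs at hy <;> subst hy <;> simp only [evenStarter] <;> split_ifs <;>
    simp at * <;> omega

lemma evenStarter_realizes_same (hs : 6 ≤ s) (b : Bool) {n : ℕ} (hn : 2 ≤ n)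
    (hn' : n + 2 ≤ 2 * s) (hns : n ≠ s) :
    Realizes (liftNat (h := 2 * s) (evenStarter s)) b b n := by
  apply realizes_liftNat
  rcases Nat.even_or_odd' n with ⟨k, rfl | rfl⟩
  · by_cases hk : k < (s + 1) / 2
    · refine ⟨2 * s - k, by omega, ?_⟩
      simp only [evenStarter]; split_ifs <;> simp at * <;> omega
    · refine ⟨s - k, by omega, ?_⟩
      simp only [evenStarter]; split_ifs <;> simp at * <;> omega
  · by_cases hk : 2 * k + 2 + 2 * ((s + 1) / 2) ≤ 2 * s
    · refine ⟨s - k, by omega, ?_⟩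
      simp only [evenStarter]; split_ifs <;> simp at * <;> omega
    · refine ⟨2 * s - k, by omega, ?_⟩
      simp only [evenStarter]; split_ifs <;> simp at * <;> omega

lemma evenStarter_realizes_cross (hs : 6 ≤ s) {n : ℕ}
    (hn : n = s ∨ n = s - 1 ∨ n = s + 1 - (s + 1) / 2 ∨ n = s + (s + 1) / 2) :
    Realizes (liftNat (h := 2 * s) (evenStarter s)) false true n := by
  apply realizes_liftNat
  rcases hn with rfl | rfl | rfl | rfl
  · exact ⟨0, by omega, by simp [evenStarter]⟩
  · refine ⟨s + 1, by omega, ?_⟩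
    simp only [evenStarter]; split_ifs <;> simp at * <;> omega
  · refine ⟨(s + 1) / 2, by omega, ?_⟩
    simp only [evenStarter]; split_ifs <;> simp at * <;> omega
  · refine ⟨s, by omega, ?_⟩
    simp only [evenStarter]; split_ifs <;> simp at * <;> omega

def evenCrossings (s : ℕ) : Finset ℕ :=
  range (2 * s) \ {1, 2, s - 1, s, s + 1 - (s + 1) / 2, s + (s + 1) / 2, 2 * s - 2, 2 * s - 1}

lemma card_evenCrossings (hs : 6 ≤ s) : #(evenCrossings s) = 2 * s - 8 := by
  have : #({1, 2, s - 1, s, s + 1 - (s + 1) / 2, s + (s + 1) / 2, 2 * s - 2, 2 * s - 1} :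
      Finset ℕ) = 8 := by
    repeat rw [card_insert_of_notMem (by simp; omega)]
    rfl
  rw [evenCrossings, card_sdiff_of_subset (by intro n; simp; omega), this, card_range]

lemma natCast_ne_zero_zmod_two_mul (hs : 1 ≤ s) : (s : ZMod (2 * s)) ≠ 0 := fun h0 => by
  have := Nat.le_of_dvd (by omega) ((ZMod.natCast_eq_zero_iff s (2 * s)).1 h0)
  omega

def evenScheme (hs : 6 ≤ s) : CyclicScheme (2 * s) (Option (evenCrossings s)) :=
  have : NeZero (2 * s) := ⟨by omega⟩
  { starter := liftNat (evenStarter s)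
    extra := Option.elim' (shift (s : ZMod (2 * s))) fun c => crossMatching (c : ℕ)
    starter_ne := (isFreeInvolutionBelow_evenStarter hs).liftNat_ne
    starter_involutive := (isFreeInvolutionBelow_evenStarter hs).liftNat_involutive
    extra_ne
      | none => shift_ne (natCast_ne_zero_zmod_two_mul (by omega))
      | some _ => crossMatching_ne _
    extra_involutive
      | none => shift_involutive (by rw [← Nat.cast_add, ← two_mul, ZMod.natCast_self])
      | some _ => crossMatching_involutive _
    extra_shift
      | none => shift_shift _
      | some _ => crossMatching_shift _
    realizes_same b n hn hn' := by
      by_cases hns : n = s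
      · exact .inr ⟨none, 0, by simp [shift, hns]⟩
      · exact .inl (evenStarter_realizes_same hs b hn hn' hns)
    realizes_cross n hn _ _ _ _ := by
      by_cases hst : n = s ∨ n = s - 1 ∨ n = s + 1 - (s + 1) / 2 ∨ n = s + (s + 1) / 2
      · exact .inl (evenStarter_realizes_cross hs hst)
      · exact .inr ⟨some ⟨n, by simp [evenCrossings]; omega⟩, realizes_crossMatching _⟩ }

end Even

def cover8 : TriangleMatchingCover (Fin 8) (Fin 8) (Fin 1) where
  tri := fun i => {i, i + 1, i + 3}
  mat := ![![4, 5, 6, 7, 0, 1, 2, 3]]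
  card_tri := by decide
  mat_ne := by decide
  mat_involutive := by unfold Involutive; decide
  covers := by unfold CoversEdge; decide

def cover10 : TriangleMatchingCover (Fin 10) (Fin 10) (Fin 3) where
  tri := fun i => {i, i + 1, i + 3}
  mat := ![![4, 6, 8, 7, 0, 9, 1, 3, 2, 5],
    ![5, 7, 6, 9, 8, 0, 2, 1, 4, 3],
    ![6, 5, 7, 8, 9, 1, 0, 2, 3, 4]]
  card_tri := by decide
  mat_ne := by decide
  mat_involutive := by unfold Involutive; decide
  covers := by unfold CoversEdge; decide

def cover12 : TriangleMatchingCover (Fin 12) (Fin 12) (Fin 5) where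
  tri := fun i => {i, i + 1, i + 3}
  mat := ![![4, 5, 8, 9, 0, 1, 10, 11, 2, 3, 6, 7],
    ![6, 7, 10, 11, 8, 9, 0, 1, 4, 5, 2, 3],
    ![8, 9, 6, 7, 10, 11, 2, 3, 0, 1, 4, 5],
    ![5, 8, 7, 10, 9, 0, 11, 2, 1, 4, 3, 6],
    ![7, 6, 9, 8, 11, 10, 1, 0, 3, 2, 5, 4]]
  card_tri := by decide
  mat_ne := by decide
  mat_involutive := by unfold Involutive; decide
  covers := by unfold CoversEdge; decide

def cover16 : TriangleMatchingCover (Fin 16) (Fin 16) (Fin 9) where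
  tri := fun i =>
    if i.val < 8 then {2 * i, 2 * i + 3, 2 * i + 5} else {2 * i + 1, 2 * i + 2, 2 * i + 4}
  mat := ![![7, 5, 14, 8, 13, 1, 12, 0, 3, 15, 11, 10, 6, 4, 2, 9],
    ![4, 11, 9, 7, 0, 10, 15, 3, 14, 2, 5, 1, 13, 12, 8, 6],
    ![10, 8, 6, 13, 11, 9, 2, 12, 1, 5, 0, 4, 7, 3, 15, 14],
    ![1, 0, 12, 10, 8, 15, 13, 11, 4, 14, 3, 7, 2, 6, 9, 5],
    ![11, 7, 3, 2, 14, 12, 10, 1, 15, 13, 6, 0, 5, 9, 4, 8],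
    ![6, 10, 13, 9, 5, 4, 0, 14, 12, 3, 1, 15, 8, 2, 7, 11],
    ![9, 13, 8, 12, 15, 11, 7, 6, 2, 0, 14, 5, 3, 1, 10, 4],
    ![12, 6, 11, 15, 10, 14, 1, 13, 9, 8, 4, 2, 0, 7, 5, 3],
    ![8, 9, 10, 11, 12, 13, 14, 15, 0, 1, 2, 3, 4, 5, 6, 7]]
  card_tri := by decide
  mat_ne := by decide
  mat_involutive := by unfold Involutive; decide
  covers := by unfold CoversEdge; decide

def cover20 : TriangleMatchingCover (Fin 20) (Fin 20) (Fin 13) where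
  tri := fun i =>
    if i.val < 10 then {2 * i, 2 * i + 3, 2 * i + 5} else {2 * i + 1, 2 * i + 2, 2 * i + 4}
  mat := ![![11, 9, 18, 7, 16, 12, 15, 3, 14, 1, 17, 0, 5, 19, 8, 6, 4, 10, 2, 13],
    ![4, 15, 13, 11, 0, 9, 18, 14, 17, 5, 16, 3, 19, 2, 7, 1, 10, 8, 6, 12],
    ![8, 14, 6, 17, 15, 13, 2, 11, 0, 16, 19, 7, 18, 5, 1, 4, 9, 3, 12, 10],
    ![14, 12, 10, 16, 8, 19, 17, 15, 4, 13, 2, 18, 1, 9, 0, 7, 3, 6, 11, 5],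
    ![13, 7, 16, 14, 12, 18, 10, 1, 19, 17, 6, 15, 4, 0, 3, 11, 2, 9, 5, 8],
    ![7, 10, 15, 9, 18, 16, 14, 0, 12, 3, 1, 19, 8, 17, 6, 2, 5, 13, 4, 11],
    ![6, 13, 9, 12, 17, 11, 0, 18, 16, 2, 14, 5, 3, 1, 10, 19, 8, 4, 7, 15],
    ![9, 17, 8, 15, 11, 14, 19, 13, 2, 0, 18, 4, 16, 7, 5, 3, 12, 1, 10, 6],
    ![12, 8, 11, 19, 10, 17, 13, 16, 1, 15, 4, 2, 0, 6, 18, 9, 7, 5, 14, 3],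
    ![16, 5, 14, 10, 13, 1, 12, 19, 15, 18, 3, 17, 6, 4, 2, 8, 0, 11, 9, 7],
    ![10, 11, 12, 13, 14, 15, 16, 17, 18, 19, 0, 1, 2, 3, 4, 5, 6, 7, 8, 9],
    ![1, 0, 3, 2, 5, 4, 7, 6, 9, 8, 11, 10, 13, 12, 15, 14, 17, 16, 19, 18],
    ![15, 6, 17, 8, 19, 10, 1, 12, 3, 14, 5, 16, 7, 18, 9, 0, 11, 2, 13, 4]]
  card_tri := by decide
  mat_ne := by decide
  mat_involutive := by unfold Involutive; decide
  covers := by unfold CoversEdge; decide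

lemma nonempty_cover_odd {s v : ℕ} (hs : 3 ≤ s) (hv : v + 7 = 2 * (2 * s + 1)) :
    Nonempty (TriangleMatchingCover (Fin (v + 7)) (Fin (v + 7)) (Fin v)) :=
  ((oddScheme hs).toCover (by omega)).nonempty_fin (by simp [ZMod.card]; omega)
    (by simp [ZMod.card]; omega) (by simp [ZMod.card, card_oddCrossings hs]; omega)

lemma nonempty_cover_even {s v : ℕ} (hs : 6 ≤ s) (hv : v + 7 = 2 * (2 * s)) :
    Nonempty (TriangleMatchingCover (Fin (v + 7)) (Fin (v + 7)) (Fin v)) :=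
  have : NeZero (2 * s) := ⟨by omega⟩
  ((evenScheme hs).toCover (by omega)).nonempty_fin (by simp [ZMod.card]; omega)
    (by simp [ZMod.card]; omega) (by simp [ZMod.card, card_evenCrossings hs]; omega)

lemma nonempty_cover {v : ℕ} (hv : Odd v) :
    Nonempty (TriangleMatchingCover (Fin (v + 7)) (Fin (v + 7)) (Fin v)) := by
  obtain ⟨m, rfl⟩ := hv
  rcases Nat.even_or_odd' m with ⟨s, rfl | rfl⟩
  · rcases lt_or_ge s 4 with hs | hs
    · interval_cases s
      exacts [⟨cover8⟩, ⟨cover12⟩, ⟨cover16⟩, ⟨cover20⟩]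
    · exact nonempty_cover_even (s := s + 2) (by omega) (by omega)
  · rcases eq_or_ne s 0 with rfl | hs
    · exact ⟨cover10⟩
    · exact nonempty_cover_odd (s := s + 2) (by omega) (by omega)

theorem kv7_triangle_matching_decomposition_general (v : ℕ) (hodd : Odd v) :
    ∃ (T : Fin (v + 7) → Finset (Fin (v + 7)))
      (M : Fin v → Fin (v + 7) → Fin (v + 7)),
      (∀ i, (T i).card = 3) ∧
      (∀ k x, M k x ≠ x) ∧
      (∀ k x, M k (M k x) = x) ∧
      (∀ x y : Fin (v + 7), x ≠ y →
        (Finset.univ.filter (fun i => x ∈ T i ∧ y ∈ T i)).card +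
        (Finset.univ.filter (fun k : Fin v => M k x = y)).card = 1) ∧
      (∀ x, (Finset.univ.filter (fun i => x ∈ T i)).card = 3) := by
  obtain ⟨C⟩ := nonempty_cover hodd
  have hκ : Fintype.card (Fin v) + 7 = Fintype.card (Fin (v + 7)) := by simp
  exact ⟨C.tri, C.mat, C.card_tri, C.mat_ne, C.mat_involutive,
    fun _ _ hxy => C.card_tri_pair_add_card_mat_eq_one rfl hκ hxy,
    C.card_tri_mem_eq_three rfl hκ⟩

/-- for odd v ≥ 1 the edges of K_{v+7} partition into v+7 triangles and
v perfect matchings (each matching given by a fixed-point-free involution); in particular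
every vertex lies in exactly three triangles. -/
theorem kv7_triangle_matching_decomposition (v : ℕ) (hodd : Odd v) (hv : 1 ≤ v) :
    ∃ (T : Fin (v + 7) → Finset (Fin (v + 7)))
      (M : Fin v → Fin (v + 7) → Fin (v + 7)),
      (∀ i, (T i).card = 3) ∧
      (∀ k x, M k x ≠ x) ∧
      (∀ k x, M k (M k x) = x) ∧
      (∀ x y : Fin (v + 7), x ≠ y →
        (Finset.univ.filter (fun i => x ∈ T i ∧ y ∈ T i)).card +
        (Finset.univ.filter (fun k : Fin v => M k x = y)).card = 1) ∧
      (∀ x, (Finset.univ.filter (fun i => x ∈ T i)).card = 3) :=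
  kv7_triangle_matching_decomposition_general v hodd
end
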